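/- arXiv:quant-ph/0201022 — 10 statements merged into one kernel-verified Lean document; each statement's English description precedes it below -/
import Mathlib

section
/- If Ψ : M(N,ℂ) → M(N,ℂ) is a linear positive operator with Ψ(I) = I, then for every matrix A ∈ M(N,ℂ), ‖Ψ(A)‖_F ≤ √N · ‖A‖_F, where ‖·‖_F is the Frobenius norm. -/
open Matrix
open scoped ComplexOrder

/-- Frobenius norm of a complex matrix: `√(tr (A Aᴴ))`. -/
noncomputable def frobNorm {N : ℕ} (A : Matrix (Fin N) (Fin N) ℂ) : ℝ :=
  Real.sqrt (Matrix.trace (A * Aᴴ)).re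

/-!
Write `A = X + iY` with `X, Y` Hermitian, so that `‖A‖_F² = tr X² + tr Y²`; since positive maps
preserve Hermiticity, the same splitting holds for `Ψ A = Ψ X + i Ψ Y`. For Hermitian `H` and
`c = ‖H‖_F` we have `H² ≤ tr (H²) • 1 = c² • 1`, i.e. `-c ≤ H ≤ c`. Positivity and `Ψ 1 = 1` give
`-c ≤ Ψ H ≤ c`, i.e. `(Ψ H)² ≤ c² • 1`, and taking traces `tr (Ψ H)² ≤ N c²`.
-/

open scoped MatrixOrder ComplexStarModule

theorem IsSelfAdjoint.sq_le_algebraMap_sq_iff {A : Type*} [TopologicalSpace A] [Ring A]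
    [StarRing A] [PartialOrder A] [StarOrderedRing A] [Algebra ℝ A]
    [ContinuousFunctionalCalculus ℝ A IsSelfAdjoint] [NonnegSpectrumClass ℝ A]
    {a : A} (ha : IsSelfAdjoint a) {c : ℝ} (hc : 0 ≤ c) :
    a ^ 2 ≤ algebraMap ℝ A (c ^ 2) ↔ algebraMap ℝ A (-c) ≤ a ∧ a ≤ algebraMap ℝ A c := by
  rw [← cfc_pow_id (R := ℝ) a 2, cfc_le_algebraMap_iff _ _ a, algebraMap_le_iff_le_spectrum,
    le_algebraMap_iff_spectrum_le, ← forall₂_and]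
  refine forall₂_congr fun x _ => ?_
  rw [sq_le_sq, abs_of_nonneg hc, abs_le]

namespace PositiveLinearMap

theorem isSelfAdjoint_apply {A B : Type*} [NonUnitalRing A] [Module ℝ A]
    [SMulCommClass ℝ A A] [IsScalarTower ℝ A A] [StarRing A] [TopologicalSpace A]
    [NonUnitalContinuousFunctionalCalculus ℝ A IsSelfAdjoint] [PartialOrder A]
    [StarOrderedRing A] [NonUnitalRing B] [StarRing B] [PartialOrder B] [StarOrderedRing B]
    [Module ℝ B] (f : A →ₚ[ℝ] B) {a : A} (ha : IsSelfAdjoint a) : IsSelfAdjoint (f a) := by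
  rw [← CFC.posPart_sub_negPart a ha, map_sub]
  exact (IsSelfAdjoint.of_nonneg (f.map_nonneg (CFC.posPart_nonneg a))).sub
    (IsSelfAdjoint.of_nonneg (f.map_nonneg (CFC.negPart_nonneg a)))

theorem sq_apply_le_of_sq_le {A B : Type*} [TopologicalSpace A] [Ring A] [StarRing A]
    [PartialOrder A] [StarOrderedRing A] [Algebra ℝ A]
    [ContinuousFunctionalCalculus ℝ A IsSelfAdjoint] [NonnegSpectrumClass ℝ A]
    [TopologicalSpace B] [Ring B] [StarRing B] [PartialOrder B] [StarOrderedRing B]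
    [Algebra ℝ B] [ContinuousFunctionalCalculus ℝ B IsSelfAdjoint] [NonnegSpectrumClass ℝ B]
    (f : A →ₚ[ℝ] B) (hf : f 1 = 1) {a : A} (ha : IsSelfAdjoint a) {c : ℝ} (hc : 0 ≤ c)
    (h : a ^ 2 ≤ algebraMap ℝ A (c ^ 2)) : f a ^ 2 ≤ algebraMap ℝ B (c ^ 2) := by
  have hf_algebraMap (r : ℝ) : f (algebraMap ℝ A r) = algebraMap ℝ B r := by
    rw [Algebra.algebraMap_eq_smul_one, map_smul, hf, Algebra.algebraMap_eq_smul_one]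
  obtain ⟨hlo, hhi⟩ := (ha.sq_le_algebraMap_sq_iff hc).mp h
  refine ((f.isSelfAdjoint_apply ha).sq_le_algebraMap_sq_iff hc).mpr ⟨?_, ?_⟩
  · simpa only [hf_algebraMap] using OrderHomClass.mono f hlo
  · simpa only [hf_algebraMap] using OrderHomClass.mono f hhi

end PositiveLinearMap

namespace Matrix

variable {𝕜 n m : Type*} [RCLike 𝕜] [Fintype n] [Fintype m]

theorem re_trace_mono {A B : Matrix n n 𝕜} (h : A ≤ B) :
    RCLike.re A.trace ≤ RCLike.re B.trace := by
  simpa [trace_sub] using (RCLike.nonneg_iff.mp (le_iff.mp h).trace_nonneg).1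

theorem re_trace_algebraMap [DecidableEq n] (c : ℝ) :
    RCLike.re (algebraMap ℝ (Matrix n n 𝕜) c).trace = Fintype.card n * c := by
  simp [Algebra.algebraMap_eq_smul_one, trace_smul, RCLike.smul_re, mul_comm]

theorem PosSemidef.le_algebraMap_re_trace [DecidableEq n] {P : Matrix n n 𝕜}
    (hP : P.PosSemidef) : P ≤ algebraMap ℝ (Matrix n n 𝕜) (RCLike.re P.trace) := by
  rw [le_algebraMap_iff_spectrum_le hP.isHermitian.isSelfAdjoint,
    hP.isHermitian.spectrum_real_eq_range_eigenvalues]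
  rintro _ ⟨i, rfl⟩
  rw [hP.isHermitian.trace_eq_sum_eigenvalues, map_sum]
  simp only [RCLike.ofReal_re]
  exact Finset.single_le_sum (fun j _ => hP.eigenvalues_nonneg j) (Finset.mem_univ i)

theorem re_trace_sq_apply_le [DecidableEq n] [DecidableEq m]
    (f : Matrix n n 𝕜 →ₚ[ℝ] Matrix m m 𝕜) (hf : f 1 = 1) {H : Matrix n n 𝕜}
    (hH : H.IsHermitian) :
    RCLike.re (f H ^ 2).trace ≤ Fintype.card m * RCLike.re (H ^ 2).trace := by
  have hH2 : (H ^ 2).PosSemidef := by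
    simpa [sq, hH.eq] using posSemidef_conjTranspose_mul_self H
  set c := √(RCLike.re (H ^ 2).trace)
  have hc : c ^ 2 = RCLike.re (H ^ 2).trace :=
    Real.sq_sqrt (RCLike.nonneg_iff.mp hH2.trace_nonneg).1
  have hfH : f H ^ 2 ≤ algebraMap ℝ (Matrix m m 𝕜) (c ^ 2) :=
    f.sq_apply_le_of_sq_le hf hH.isSelfAdjoint (Real.sqrt_nonneg _)
      (hc ▸ hH2.le_algebraMap_re_trace)
  simpa [re_trace_algebraMap, hc] using re_trace_mono hfH

end Matrix

theorem frobNorm_sq {N : ℕ} (A : Matrix (Fin N) (Fin N) ℂ) :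
    frobNorm A ^ 2 = (A * Aᴴ).trace.re :=
  Real.sq_sqrt (RCLike.nonneg_iff.mp (posSemidef_self_mul_conjTranspose A).trace_nonneg).1

theorem frobNorm_sq_add_I_smul {N : ℕ} {X Y : Matrix (Fin N) (Fin N) ℂ} (hX : X.IsHermitian)
    (hY : Y.IsHermitian) :
    frobNorm (X + Complex.I • Y) ^ 2 = (X ^ 2).trace.re + (Y ^ 2).trace.re := by
  have hconj : (X + Complex.I • Y)ᴴ = X - Complex.I • Y := by
    rw [conjTranspose_add, conjTranspose_smul, hX.eq, hY.eq, Complex.star_def, Complex.conj_I,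
      neg_smul, sub_eq_add_neg]
  have hexpand : (X + Complex.I • Y) * (X - Complex.I • Y)
      = X ^ 2 + Y ^ 2 + Complex.I • (Y * X - X * Y) := by
    simp only [sq, Matrix.mul_sub, Matrix.add_mul, Matrix.smul_mul, Matrix.mul_smul]
    match_scalars <;> simp
  rw [frobNorm_sq, hconj, hexpand, trace_add, trace_add, trace_smul, trace_sub,
    trace_mul_comm Y X, sub_self, smul_zero, add_zero, Complex.add_re]

theorem positive_unital_frobenius_bound {N : ℕ}
    (Ψ : Matrix (Fin N) (Fin N) ℂ →ₗ[ℂ] Matrix (Fin N) (Fin N) ℂ)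
    (hpos : ∀ X : Matrix (Fin N) (Fin N) ℂ, X.PosSemidef → (Ψ X).PosSemidef)
    (hunital : Ψ 1 = 1)
    (A : Matrix (Fin N) (Fin N) ℂ) :
    frobNorm (Ψ A) ≤ Real.sqrt N * frobNorm A := by
  let f : Matrix (Fin N) (Fin N) ℂ →ₚ[ℝ] Matrix (Fin N) (Fin N) ℂ :=
    .mk₀ (Ψ.restrictScalars ℝ) fun X hX ↦
      nonneg_iff_posSemidef.mpr (hpos X (nonneg_iff_posSemidef.mp hX))
  have hbound {H : Matrix (Fin N) (Fin N) ℂ} (hH : H.IsHermitian) :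
      (f H ^ 2).trace.re ≤ N * (H ^ 2).trace.re := by
    simpa using re_trace_sq_apply_le f hunital hH
  obtain ⟨X, Y, hX, hY, rfl⟩ :
      ∃ X Y : Matrix (Fin N) (Fin N) ℂ, X.IsHermitian ∧ Y.IsHermitian ∧ A = X + Complex.I • Y :=
    ⟨ℜ A, ℑ A, (ℜ A).2, (ℑ A).2, (realPart_add_I_smul_imaginaryPart A).symm⟩
  have hΨA : Ψ (X + Complex.I • Y) = f X + Complex.I • f Y := by
    rw [map_add, map_smul]
    rfl
  refine (pow_le_pow_iff_left₀ (Real.sqrt_nonneg _)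
    (mul_nonneg (Real.sqrt_nonneg _) (Real.sqrt_nonneg _)) two_ne_zero).mp ?_
  calc frobNorm (Ψ (X + Complex.I • Y)) ^ 2 = (f X ^ 2).trace.re + (f Y ^ 2).trace.re := by
        rw [hΨA, frobNorm_sq_add_I_smul (f.isSelfAdjoint_apply hX) (f.isSelfAdjoint_apply hY)]
    _ ≤ N * ((X ^ 2).trace.re + (Y ^ 2).trace.re) := by
        rw [mul_add]
        exact add_le_add (hbound hX) (hbound hY)
    _ = (Real.sqrt N * frobNorm (X + Complex.I • Y)) ^ 2 := by
        rw [mul_pow, Real.sq_sqrt N.cast_nonneg, frobNorm_sq_add_I_smul hX hY]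
end

section
/- Let ρ be a pure bipartite state, i.e., ρ(i₁,i₂; j₁,j₂) = R(i₁,i₂)·conj(R(j₁,j₂)) for some N×N complex matrix R. Then the quantum permanent QP(ρ) = N!·|det(R)|². -/
open Matrix Equiv
open scoped ComplexOrder

/-- The quantum permanent of a matrix on `ℂ^N ⊗ ℂ^N`:
`QP(ρ) = Σ_{τ₁,τ₂,τ₃ ∈ S_N} sgn(τ₁)sgn(τ₂)sgn(τ₃) Π_i ρ(i,τ₁(i); τ₂(i),τ₃(i))`. -/
noncomputable def QP {N : ℕ} (ρ : Matrix (Fin N × Fin N) (Fin N × Fin N) ℂ) : ℂ :=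
  ∑ τ₁ : Perm (Fin N), ∑ τ₂ : Perm (Fin N), ∑ τ₃ : Perm (Fin N),
    ((Perm.sign τ₁ : ℤ) * (Perm.sign τ₂ : ℤ) * (Perm.sign τ₃ : ℤ) : ℂ) *
      ∏ i : Fin N, ρ (i, τ₁ i) (τ₂ i, τ₃ i)

/-!
Substituting `ρ(i₁,i₂; j₁,j₂) = R i₁ i₂ · conj (R j₁ j₂)` factors each term of `QP ρ`: the sum
over `τ₁` alone is the row expansion of `det R`, and for every fixed `τ₂` the sum over `τ₃` is the
expansion of `det (conj R)` with rows permuted by `τ₂`, whose sign `sgn τ₂` cancels. The `N!`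
choices of `τ₂` then give `QP ρ = det R · N! · conj (det R) = N! |det R|²`.
-/

namespace Matrix

variable {n R : Type*} [Fintype n] [DecidableEq n] [CommRing R]

theorem det_eq_sum_sign_mul_prod_row (A : Matrix n n R) :
    A.det = ∑ τ : Perm n, ((Perm.sign τ : ℤ) : R) * ∏ i, A i (τ i) := by
  rw [← det_transpose, det_apply']
  rfl

theorem sum_sign_mul_sign_mul_prod_submatrix (σ : Perm n) (A : Matrix n n R) :
    ∑ τ : Perm n, ((Perm.sign σ : ℤ) : R) * ((Perm.sign τ : ℤ) : R) * ∏ i, A (σ i) (τ i) =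
      A.det := by
  have hσ : ((Perm.sign σ : ℤ) : R) * ((Perm.sign σ : ℤ) : R) = 1 := by
    rw [← Int.cast_mul, ← Units.val_mul, Int.units_mul_self, Units.val_one, Int.cast_one]
  calc _ = ((Perm.sign σ : ℤ) : R) * (A.submatrix σ id).det := by
        simp only [mul_assoc, ← Finset.mul_sum, det_eq_sum_sign_mul_prod_row, submatrix_apply,
          id]
    _ = A.det := by rw [det_permute, ← mul_assoc, hσ, one_mul]

end Matrix

theorem QP_eq_factorial_mul_det_mul_det {N : ℕ} (A B : Matrix (Fin N) (Fin N) ℂ)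
    (ρ : Matrix (Fin N × Fin N) (Fin N × Fin N) ℂ)
    (hρ : ∀ i₁ i₂ j₁ j₂ : Fin N, ρ (i₁, i₂) (j₁, j₂) = A i₁ i₂ * B j₁ j₂) :
    QP ρ = N.factorial * A.det * B.det := by
  calc QP ρ = ∑ τ₁ : Perm (Fin N), ((Perm.sign τ₁ : ℤ) : ℂ) * (∏ i, A i (τ₁ i)) *
        ∑ τ₂ : Perm (Fin N), ∑ τ₃ : Perm (Fin N),
          ((Perm.sign τ₂ : ℤ) : ℂ) * ((Perm.sign τ₃ : ℤ) : ℂ) * ∏ i, B (τ₂ i) (τ₃ i) := by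
        simp only [QP, hρ, Finset.prod_mul_distrib, Finset.mul_sum]
        refine Fintype.sum_congr _ _ fun τ₁ => Fintype.sum_congr _ _ fun τ₂ =>
          Fintype.sum_congr _ _ fun τ₃ => by ring
    _ = A.det * ∑ _τ₂ : Perm (Fin N), B.det := by
        simp only [sum_sign_mul_sign_mul_prod_submatrix, ← Finset.sum_mul,
          ← det_eq_sum_sign_mul_prod_row]
    _ = N.factorial * A.det * B.det := by
        rw [Finset.sum_const, Finset.card_univ, Fintype.card_perm, Fintype.card_fin, nsmul_eq_mul]
        ring

theorem QP_pure_state {N : ℕ} (R : Matrix (Fin N) (Fin N) ℂ)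
    (ρ : Matrix (Fin N × Fin N) (Fin N × Fin N) ℂ)
    (hρ : ∀ i₁ i₂ j₁ j₂ : Fin N,
      ρ (i₁, i₂) (j₁, j₂) = R i₁ i₂ * (starRingEnd ℂ) (R j₁ j₂)) :
    QP ρ = (N.factorial : ℂ) * (‖R.det‖ ^ 2 : ℝ) := by
  have hconj : (R.map (starRingEnd ℂ)).det = starRingEnd ℂ R.det := (RingHom.map_det _ R).symm
  rw [QP_eq_factorial_mul_det_mul_det R (R.map (starRingEnd ℂ)) ρ hρ, hconj, mul_assoc,
    Complex.mul_conj, Complex.normSq_eq_norm_sq]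
end

section
/- For any matrix ρ on ℂ^N ⊗ ℂ^N and any N×N matrices A₁, A₂, A₃, A₄, the quantum permanent satisfies QP((A₁ ⊗ A₂) ρ (A₃ ⊗ A₄)) = det(A₁)det(A₂)det(A₃)det(A₄) · QP(ρ). -/
open Matrix Equiv
open scoped ComplexOrder

open scoped Kronecker

variable {N : ℕ}

/-- QP with the `τ₂`-sum expressed as a determinant. -/
lemma QP_eq3 (ρ : Matrix (Fin N × Fin N) (Fin N × Fin N) ℂ) :
    QP ρ = ∑ τ₁ : Perm (Fin N), ∑ τ₃ : Perm (Fin N),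
      ((Perm.sign τ₁ : ℤ) * (Perm.sign τ₃ : ℤ) : ℂ) *
        (Matrix.of fun i j => ρ (i, τ₁ i) (j, τ₃ i)).det := by
  unfold QP
  refine Finset.sum_congr rfl fun τ₁ _ => ?_
  rw [Finset.sum_comm]
  refine Finset.sum_congr rfl fun τ₃ _ => ?_
  rw [← Matrix.det_transpose, Matrix.det_apply', Finset.mul_sum]
  refine Finset.sum_congr rfl fun τ₂ _ => ?_
  simp only [Matrix.transpose_apply, Matrix.of_apply]
  ring

/-- QP with the `τ₃`-sum expressed as a determinant. -/
lemma QP_eq4 (ρ : Matrix (Fin N × Fin N) (Fin N × Fin N) ℂ) :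
    QP ρ = ∑ τ₁ : Perm (Fin N), ∑ τ₂ : Perm (Fin N),
      ((Perm.sign τ₁ : ℤ) * (Perm.sign τ₂ : ℤ) : ℂ) *
        (Matrix.of fun i j => ρ (i, τ₁ i) (τ₂ i, j)).det := by
  unfold QP
  refine Finset.sum_congr rfl fun τ₁ _ => Finset.sum_congr rfl fun τ₂ _ => ?_
  rw [← Matrix.det_transpose, Matrix.det_apply', Finset.mul_sum]
  refine Finset.sum_congr rfl fun τ₃ _ => ?_
  simp only [Matrix.transpose_apply, Matrix.of_apply]
  ring

/-- QP with the `τ₁`-sum expressed as a determinant. -/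
lemma QP_eq2 (ρ : Matrix (Fin N × Fin N) (Fin N × Fin N) ℂ) :
    QP ρ = ∑ τ₂ : Perm (Fin N), ∑ τ₃ : Perm (Fin N),
      ((Perm.sign τ₂ : ℤ) * (Perm.sign τ₃ : ℤ) : ℂ) *
        (Matrix.of fun i j => ρ (i, j) (τ₂ i, τ₃ i)).det := by
  unfold QP
  rw [Finset.sum_comm]
  refine Finset.sum_congr rfl fun τ₂ _ => ?_
  rw [Finset.sum_comm]
  refine Finset.sum_congr rfl fun τ₃ _ => ?_
  rw [← Matrix.det_transpose, Matrix.det_apply', Finset.mul_sum]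
  refine Finset.sum_congr rfl fun τ₁ _ => ?_
  simp only [Matrix.transpose_apply, Matrix.of_apply]
  ring

/-- QP after reindexing by `τ₁⁻¹`, with the remaining "first slot" sum as a determinant. -/
lemma QP_eq1 (ρ : Matrix (Fin N × Fin N) (Fin N × Fin N) ℂ) :
    QP ρ = ∑ σ₂ : Perm (Fin N), ∑ σ₃ : Perm (Fin N),
      ((Perm.sign σ₂ : ℤ) * (Perm.sign σ₃ : ℤ) : ℂ) *
        (Matrix.of fun a j => ρ (a, j) (σ₂ j, σ₃ j)).det := by
  let e : (Perm (Fin N) × Perm (Fin N) × Perm (Fin N)) ≃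
      (Perm (Fin N) × Perm (Fin N) × Perm (Fin N)) :=
    { toFun := fun t => (t.2.1 * t.1⁻¹, t.2.2 * t.1⁻¹, t.1⁻¹)
      invFun := fun s => (s.2.2⁻¹, s.1 * s.2.2⁻¹, s.2.1 * s.2.2⁻¹)
      left_inv := by intro t; simp [mul_assoc]
      right_inv := by intro s; simp [mul_assoc] }
  have hQ : QP ρ = ∑ t : Perm (Fin N) × Perm (Fin N) × Perm (Fin N),
      ((Perm.sign t.1 : ℤ) * (Perm.sign t.2.1 : ℤ) * (Perm.sign t.2.2 : ℤ) : ℂ) *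
        ∏ i : Fin N, ρ (i, t.1 i) (t.2.1 i, t.2.2 i) := by
    rw [Fintype.sum_prod_type]
    refine Finset.sum_congr rfl fun τ₁ _ => ?_
    rw [Fintype.sum_prod_type]
  have hR : (∑ σ₂ : Perm (Fin N), ∑ σ₃ : Perm (Fin N),
      ((Perm.sign σ₂ : ℤ) * (Perm.sign σ₃ : ℤ) : ℂ) *
        (Matrix.of fun a j => ρ (a, j) (σ₂ j, σ₃ j)).det)
      = ∑ s : Perm (Fin N) × Perm (Fin N) × Perm (Fin N),
        ((Perm.sign s.1 : ℤ) * (Perm.sign s.2.1 : ℤ) * (Perm.sign s.2.2 : ℤ) : ℂ) *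
          ∏ j : Fin N, ρ (s.2.2 j, j) (s.1 j, s.2.1 j) := by
    rw [Fintype.sum_prod_type]
    refine Finset.sum_congr rfl fun σ₂ _ => ?_
    rw [Fintype.sum_prod_type]
    refine Finset.sum_congr rfl fun σ₃ _ => ?_
    rw [Matrix.det_apply', Finset.mul_sum]
    refine Finset.sum_congr rfl fun π _ => ?_
    simp only [Matrix.of_apply]
    ring
  rw [hQ, hR]
  refine Fintype.sum_equiv e _ _ fun t => ?_
  obtain ⟨τ₁, τ₂, τ₃⟩ := t
  show ((Perm.sign τ₁ : ℤ) * (Perm.sign τ₂ : ℤ) * (Perm.sign τ₃ : ℤ) : ℂ) *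
        ∏ i : Fin N, ρ (i, τ₁ i) (τ₂ i, τ₃ i)
      = ((Perm.sign (e (τ₁,τ₂,τ₃)).1 : ℤ) * (Perm.sign (e (τ₁,τ₂,τ₃)).2.1 : ℤ) * (Perm.sign (e (τ₁,τ₂,τ₃)).2.2 : ℤ) : ℂ) *
        ∏ j : Fin N, ρ ((e (τ₁,τ₂,τ₃)).2.2 j, j) ((e (τ₁,τ₂,τ₃)).1 j, (e (τ₁,τ₂,τ₃)).2.1 j)
  show ((Perm.sign τ₁ : ℤ) * (Perm.sign τ₂ : ℤ) * (Perm.sign τ₃ : ℤ) : ℂ) *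
        ∏ i : Fin N, ρ (i, τ₁ i) (τ₂ i, τ₃ i)
      = ((Perm.sign (τ₂ * τ₁⁻¹) : ℤ) * (Perm.sign (τ₃ * τ₁⁻¹) : ℤ) * (Perm.sign τ₁⁻¹ : ℤ) : ℂ) *
        ∏ j : Fin N, ρ (τ₁⁻¹ j, j) ((τ₂ * τ₁⁻¹) j, (τ₃ * τ₁⁻¹) j)
  have hprod : (∏ i : Fin N, ρ (i, τ₁ i) (τ₂ i, τ₃ i))
      = ∏ j : Fin N, ρ (τ₁⁻¹ j, j) ((τ₂ * τ₁⁻¹) j, (τ₃ * τ₁⁻¹) j) := by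
    rw [← Equiv.prod_comp τ₁⁻¹ (fun i => ρ (i, τ₁ i) (τ₂ i, τ₃ i))]
    simp [Equiv.Perm.mul_apply]
  rw [hprod]
  have h1 : ((Perm.sign τ₁ : ℤ) : ℂ) * ((Perm.sign τ₁ : ℤ) : ℂ) = 1 := by
    rw [← Int.cast_mul, ← Units.val_mul, Int.units_mul_self]; norm_num
  simp only [Equiv.Perm.sign_mul, Equiv.Perm.sign_inv, Units.val_mul, Int.cast_mul]
  linear_combination (-((Perm.sign τ₁ : ℤ) : ℂ) * ((Perm.sign τ₂ : ℤ) : ℂ) *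
    ((Perm.sign τ₃ : ℤ) : ℂ) *
    ∏ j : Fin N, ρ (τ₁⁻¹ j, j) ((τ₂ * τ₁⁻¹) j, (τ₃ * τ₁⁻¹) j)) * h1

lemma QP_A1 (ρ : Matrix (Fin N × Fin N) (Fin N × Fin N) ℂ) (A : Matrix (Fin N) (Fin N) ℂ) :
    QP ((A ⊗ₖ (1 : Matrix (Fin N) (Fin N) ℂ)) * ρ) = A.det * QP ρ := by
  rw [QP_eq1, QP_eq1, Finset.mul_sum]
  refine Finset.sum_congr rfl fun σ₂ _ => ?_
  rw [Finset.mul_sum]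
  refine Finset.sum_congr rfl fun σ₃ _ => ?_
  have hM : (Matrix.of fun a j => ((A ⊗ₖ (1 : Matrix (Fin N) (Fin N) ℂ)) * ρ) (a, j) (σ₂ j, σ₃ j))
      = A * (Matrix.of fun a j => ρ (a, j) (σ₂ j, σ₃ j)) := by
    ext a j
    simp [Matrix.mul_apply, Fintype.sum_prod_type, Matrix.one_apply, mul_ite, ite_mul,
      Finset.sum_ite_eq, mul_assoc]
  rw [hM, Matrix.det_mul]
  ring

lemma QP_A2 (ρ : Matrix (Fin N × Fin N) (Fin N × Fin N) ℂ) (A : Matrix (Fin N) (Fin N) ℂ) :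
    QP (((1 : Matrix (Fin N) (Fin N) ℂ) ⊗ₖ A) * ρ) = A.det * QP ρ := by
  rw [QP_eq2, QP_eq2, Finset.mul_sum]
  refine Finset.sum_congr rfl fun τ₂ _ => ?_
  rw [Finset.mul_sum]
  refine Finset.sum_congr rfl fun τ₃ _ => ?_
  have hM : (Matrix.of fun i j => (((1 : Matrix (Fin N) (Fin N) ℂ) ⊗ₖ A) * ρ) (i, j) (τ₂ i, τ₃ i))
      = (Matrix.of fun i b => ρ (i, b) (τ₂ i, τ₃ i)) * Aᵀ := by
    ext i j
    simp [Matrix.mul_apply, Fintype.sum_prod_type, Matrix.one_apply, mul_ite, ite_mul,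
      Finset.sum_ite_eq, mul_comm]
  rw [hM, Matrix.det_mul, Matrix.det_transpose]
  ring

lemma QP_A3 (ρ : Matrix (Fin N × Fin N) (Fin N × Fin N) ℂ) (A : Matrix (Fin N) (Fin N) ℂ) :
    QP (ρ * (A ⊗ₖ (1 : Matrix (Fin N) (Fin N) ℂ))) = A.det * QP ρ := by
  rw [QP_eq3, QP_eq3, Finset.mul_sum]
  refine Finset.sum_congr rfl fun τ₁ _ => ?_
  rw [Finset.mul_sum]
  refine Finset.sum_congr rfl fun τ₃ _ => ?_
  have hM : (Matrix.of fun i j => (ρ * (A ⊗ₖ (1 : Matrix (Fin N) (Fin N) ℂ))) (i, τ₁ i) (j, τ₃ i))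
      = (Matrix.of fun i c => ρ (i, τ₁ i) (c, τ₃ i)) * A := by
    ext i j
    simp [Matrix.mul_apply, Fintype.sum_prod_type, Matrix.one_apply, mul_ite, ite_mul,
      Finset.sum_ite_eq, mul_comm]
  rw [hM, Matrix.det_mul]
  ring

lemma QP_A4 (ρ : Matrix (Fin N × Fin N) (Fin N × Fin N) ℂ) (A : Matrix (Fin N) (Fin N) ℂ) :
    QP (ρ * ((1 : Matrix (Fin N) (Fin N) ℂ) ⊗ₖ A)) = A.det * QP ρ := by
  rw [QP_eq4, QP_eq4, Finset.mul_sum]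
  refine Finset.sum_congr rfl fun τ₁ _ => ?_
  rw [Finset.mul_sum]
  refine Finset.sum_congr rfl fun τ₂ _ => ?_
  have hM : (Matrix.of fun i j => (ρ * ((1 : Matrix (Fin N) (Fin N) ℂ) ⊗ₖ A)) (i, τ₁ i) (τ₂ i, j))
      = (Matrix.of fun i d => ρ (i, τ₁ i) (τ₂ i, d)) * A := by
    ext i j
    simp [Matrix.mul_apply, Fintype.sum_prod_type, Matrix.one_apply, mul_ite, ite_mul,
      Finset.sum_ite_eq, mul_comm]
  rw [hM, Matrix.det_mul]
  ring

theorem QP_local_transformation {N : ℕ}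
    (ρ : Matrix (Fin N × Fin N) (Fin N × Fin N) ℂ)
    (A₁ A₂ A₃ A₄ : Matrix (Fin N) (Fin N) ℂ) :
    QP ((A₁ ⊗ₖ A₂) * ρ * (A₃ ⊗ₖ A₄)) =
      A₁.det * A₂.det * A₃.det * A₄.det * QP ρ := by
  have h12 : A₁ ⊗ₖ A₂ = (A₁ ⊗ₖ (1 : Matrix (Fin N) (Fin N) ℂ)) *
      ((1 : Matrix (Fin N) (Fin N) ℂ) ⊗ₖ A₂) := by
    rw [← Matrix.mul_kronecker_mul, Matrix.mul_one, Matrix.one_mul]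
  have h34 : A₃ ⊗ₖ A₄ = (A₃ ⊗ₖ (1 : Matrix (Fin N) (Fin N) ℂ)) *
      ((1 : Matrix (Fin N) (Fin N) ℂ) ⊗ₖ A₄) := by
    rw [← Matrix.mul_kronecker_mul, Matrix.mul_one, Matrix.one_mul]
  have hassoc : (A₁ ⊗ₖ (1 : Matrix (Fin N) (Fin N) ℂ)) *
        ((1 : Matrix (Fin N) (Fin N) ℂ) ⊗ₖ A₂) * ρ *
        ((A₃ ⊗ₖ (1 : Matrix (Fin N) (Fin N) ℂ)) * ((1 : Matrix (Fin N) (Fin N) ℂ) ⊗ₖ A₄))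
      = (A₁ ⊗ₖ (1 : Matrix (Fin N) (Fin N) ℂ)) *
        (((1 : Matrix (Fin N) (Fin N) ℂ) ⊗ₖ A₂) *
          (ρ * (A₃ ⊗ₖ (1 : Matrix (Fin N) (Fin N) ℂ)) *
            ((1 : Matrix (Fin N) (Fin N) ℂ) ⊗ₖ A₄))) := by
    simp only [Matrix.mul_assoc]
  rw [h12, h34, hassoc, QP_A1, QP_A2, QP_A4, QP_A3]
  ring
end

section
/- Let ρ be a bipartite unnormalized density matrix (positive semidefinite on ℂ^N ⊗ ℂ^N). Then QP(ρ) = ⟨ρ^{⊗N} Z, Z⟩ where Z is the tensor with entries Z(j₁^{(1)},j₂^{(1)};…;j₁^{(N)},j₂^{(N)}) = (1/√N!)·sgn(τ₁)sgn(τ₂) if j_k^{(i)} = τ_k(i) for some permutations τ₁,τ₂ ∈ S_N, and 0 otherwise. Consequently, if ρ₁ ⪰ ρ₂ ⪰ 0 then QP(ρ₁) ≥ QP(ρ₂) ≥ 0. -/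
open Matrix Equiv
open scoped ComplexOrder

/-- The `N`-fold tensor (Kronecker) power of a matrix on `ℂ^N ⊗ ℂ^N`. -/
noncomputable def tensorPow {N : ℕ} (ρ : Matrix (Fin N × Fin N) (Fin N × Fin N) ℂ) :
    Matrix (Fin N → Fin N × Fin N) (Fin N → Fin N × Fin N) ℂ :=
  fun f g => ∏ i : Fin N, ρ (f i) (g i)

/-- The vector `Z`:  `Z(j₁^{(1)},j₂^{(1)};…;j₁^{(N)},j₂^{(N)}) = (1/√N!)·sgn(τ₁)sgn(τ₂)`
if `j_k^{(i)} = τ_k(i)` for permutations `τ₁, τ₂ ∈ S_N`, and `0` otherwise.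
(The permutations, when they exist, are unique, so the inner sum has at most one
nonzero term.) -/
noncomputable def Zvec (N : ℕ) : (Fin N → Fin N × Fin N) → ℂ :=
  fun f => ((Real.sqrt (N.factorial))⁻¹ : ℝ) *
    ∑ τ₁ : Perm (Fin N), ∑ τ₂ : Perm (Fin N),
      if f = fun i => (τ₁ i, τ₂ i) then ((Perm.sign τ₁ : ℤ) * (Perm.sign τ₂ : ℤ) : ℂ) else 0

/-!
Since `Z` is supported on the "graphs" `i ↦ (τ₁ i, τ₂ i)` of pairs of permutations,
`⟨ρ^{⊗N} Z, Z⟩` is `1/N!` times a signed sum over four permutations `τ₁, τ₂, σ₁, σ₂`.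
Right-multiplying `τ₂, σ₁, σ₂` by `τ₁` and reindexing the product over `i` by `τ₁` turns the
summand of each fixed `τ₁` into `QP ρ`, so the `N!` copies cancel the normalisation.

Monotonicity then follows from the quadratic-form expression: a Kronecker product of a family
of PSD matrices `BᵢᴴBᵢ` is the PSD matrix `(⊗ Bᵢ)ᴴ(⊗ Bᵢ)`, and expanding
`(ρ₂ + (ρ₁ - ρ₂))^{⊗N}` multilinearly writes `ρ₁^{⊗N} - ρ₂^{⊗N}` as a sum of such products.
-/

namespace Matrix

lemma sum_mulVec_mul_conj {n R : Type*} [Fintype n] [CommSemiring R] [StarRing R]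
    (M : Matrix n n R) (v : n → R) :
    ∑ f, (M *ᵥ v) f * starRingEnd R (v f) = star v ⬝ᵥ (M *ᵥ v) :=
  Fintype.sum_congr _ _ fun _ => mul_comm _ _

variable {ι R : Type*} [Fintype ι] {l m n : ι → Type*}

def piKronecker [CommMonoid R] (A : (i : ι) → Matrix (m i) (n i) R) :
    Matrix ((i : ι) → m i) ((i : ι) → n i) R :=
  of fun f g => ∏ i, A i (f i) (g i)

@[simp]
lemma piKronecker_apply [CommMonoid R] (A : (i : ι) → Matrix (m i) (n i) R)
    (f : (i : ι) → m i) (g : (i : ι) → n i) :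
    piKronecker A f g = ∏ i, A i (f i) (g i) := rfl

lemma piKronecker_mul [CommSemiring R] [DecidableEq ι] [∀ i, Fintype (m i)]
    (A : (i : ι) → Matrix (l i) (m i) R) (B : (i : ι) → Matrix (m i) (n i) R) :
    piKronecker A * piKronecker B = piKronecker fun i => A i * B i := by
  ext f g
  simp only [mul_apply, piKronecker_apply, Fintype.prod_sum, Finset.prod_mul_distrib]

lemma conjTranspose_piKronecker [CommSemiring R] [StarRing R]
    (A : (i : ι) → Matrix (m i) (n i) R) :
    (piKronecker A)ᴴ = piKronecker fun i => (A i)ᴴ := by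
  ext f g
  simp only [conjTranspose_apply, piKronecker_apply, star_prod]

lemma piKronecker_add [CommSemiring R] [DecidableEq ι] (A B : (i : ι) → Matrix (m i) (n i) R) :
    piKronecker (A + B) = ∑ s : Finset ι, piKronecker (s.piecewise A B) := by
  ext f g
  simp only [piKronecker_apply, Pi.add_apply, add_apply, sum_apply, Fintype.prod_add]
  refine Fintype.sum_congr _ _ fun s => ?_
  rw [← Finset.prod_mul_prod_compl s]
  congr 1 <;> refine Finset.prod_congr rfl fun i hi => ?_
  · rw [s.piecewise_eq_of_mem _ _ hi]
  · rw [s.piecewise_eq_of_notMem _ _ (Finset.mem_compl.mp hi)]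

variable {𝕜 : Type*} [RCLike 𝕜] [∀ i, Fintype (n i)]

open scoped MatrixOrder in
theorem PosSemidef.piKronecker {A : (i : ι) → Matrix (n i) (n i) 𝕜}
    (hA : ∀ i, (A i).PosSemidef) : (piKronecker A).PosSemidef := by
  classical
  choose B hB using fun i => CStarAlgebra.nonneg_iff_eq_star_mul_self.mp (hA i).nonneg
  simp only [star_eq_conjTranspose] at hB
  rw [show A = fun i => (B i)ᴴ * B i from funext hB, ← piKronecker_mul, ← conjTranspose_piKronecker]
  exact posSemidef_conjTranspose_mul_self _

theorem PosSemidef.piKronecker_sub {A B : (i : ι) → Matrix (n i) (n i) 𝕜}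
    (hB : ∀ i, (B i).PosSemidef) (hAB : ∀ i, (A i - B i).PosSemidef) :
    (Matrix.piKronecker A - Matrix.piKronecker B).PosSemidef := by
  classical
  obtain ⟨D, rfl⟩ : ∃ D, A = D + B := ⟨A - B, (sub_add_cancel A B).symm⟩
  simp only [Pi.add_apply, add_sub_cancel_right] at hAB
  rw [piKronecker_add, ← Finset.add_sum_erase _ _ (Finset.mem_univ ∅), Finset.piecewise_empty,
    add_sub_cancel_left]
  exact posSemidef_sum _ fun s _ => .piKronecker fun i => s.piecewise_cases _ _ _ (hAB i) (hB i)

end Matrix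

lemma intCast_sign_mul_self {α R : Type*} [DecidableEq α] [Fintype α] [Ring R] (τ : Perm α) :
    ((Perm.sign τ : ℤ) : R) * (Perm.sign τ : ℤ) = 1 := by
  rw [← Int.cast_mul, ← Units.val_mul, Int.units_mul_self, Units.val_one, Int.cast_one]

section QuantumPermanent

variable {N : ℕ}

lemma sqrt_factorial_inv_sq_mul_factorial :
    (((Real.sqrt N.factorial)⁻¹ : ℝ) : ℂ) ^ 2 * N.factorial = 1 := by
  have h : ((Real.sqrt N.factorial)⁻¹ : ℝ) ^ 2 * N.factorial = 1 := by
    rw [inv_pow, Real.sq_sqrt (Nat.cast_nonneg _), inv_mul_cancel₀ (by positivity)]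
  exact_mod_cast h

lemma star_Zvec : star (Zvec N) = Zvec N := by
  ext f
  simp only [Pi.star_apply, Zvec, star_mul', star_sum, Complex.star_def, Complex.conj_ofReal,
    apply_ite, map_intCast, map_zero]

lemma sum_Zvec_mul (φ : (Fin N → Fin N × Fin N) → ℂ) :
    ∑ f, Zvec N f * φ f = ((Real.sqrt N.factorial)⁻¹ : ℝ) *
      ∑ σ₁ : Perm (Fin N), ∑ σ₂ : Perm (Fin N),
        ((Perm.sign σ₁ : ℤ) * (Perm.sign σ₂ : ℤ) : ℂ) * φ (fun i => (σ₁ i, σ₂ i)) := by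
  simp only [Zvec, Finset.sum_mul, Finset.mul_sum, ite_mul, zero_mul, mul_assoc]
  rw [Finset.sum_comm]
  refine Fintype.sum_congr _ _ fun σ₁ => ?_
  rw [Finset.sum_comm]
  refine Fintype.sum_congr _ _ fun σ₂ => ?_
  rw [← Finset.mul_sum, Fintype.sum_ite_eq']

lemma QP_eq_sum_perm_mul (ρ : Matrix (Fin N × Fin N) (Fin N × Fin N) ℂ) (τ : Perm (Fin N)) :
    QP ρ = ∑ τ₂ : Perm (Fin N), ∑ σ₁ : Perm (Fin N), ∑ σ₂ : Perm (Fin N),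
      ((Perm.sign τ : ℤ) * (Perm.sign τ₂ : ℤ) * (Perm.sign σ₁ : ℤ) * (Perm.sign σ₂ : ℤ) : ℂ) *
        ∏ i, ρ (τ i, τ₂ i) (σ₁ i, σ₂ i) := by
  -- substitute `x ↦ x * τ` in all three sums; the extra factor is `sign τ ^ 4 = 1`
  refine Fintype.sum_equiv (Equiv.mulRight τ) _ _ fun a => ?_
  refine Fintype.sum_equiv (Equiv.mulRight τ) _ _ fun b => ?_
  refine Fintype.sum_equiv (Equiv.mulRight τ) _ _ fun d => ?_
  have hprod : ∏ i, ρ (τ i, a (τ i)) (b (τ i), d (τ i)) = ∏ i, ρ (i, a i) (b i, d i) :=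
    Equiv.prod_comp τ fun i => ρ (i, a i) (b i, d i)
  simp only [coe_mulRight, Perm.coe_mul, Function.comp_apply, Perm.sign_mul, Units.val_mul,
    Int.cast_mul, hprod]
  linear_combination (-(Perm.sign a : ℤ) * (Perm.sign b : ℤ) * (Perm.sign d : ℤ) *
    (∏ i, ρ (i, a i) (b i, d i)) * (((Perm.sign τ : ℤ) : ℂ) * (Perm.sign τ : ℤ) + 1)) *
      intCast_sign_mul_self (R := ℂ) τ

lemma tensorPow_eq_piKronecker (ρ : Matrix (Fin N × Fin N) (Fin N × Fin N) ℂ) :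
    tensorPow ρ = piKronecker fun _ => ρ := rfl

lemma dotProduct_tensorPow_Zvec (ρ : Matrix (Fin N × Fin N) (Fin N × Fin N) ℂ) :
    star (Zvec N) ⬝ᵥ (tensorPow ρ *ᵥ Zvec N) = (((Real.sqrt N.factorial)⁻¹ : ℝ) : ℂ) ^ 2 *
      ∑ τ₁ : Perm (Fin N), ∑ τ₂ : Perm (Fin N), ∑ σ₁ : Perm (Fin N), ∑ σ₂ : Perm (Fin N),
        ((Perm.sign τ₁ : ℤ) * (Perm.sign τ₂ : ℤ) * (Perm.sign σ₁ : ℤ) * (Perm.sign σ₂ : ℤ) : ℂ) *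
          ∏ i, ρ (τ₁ i, τ₂ i) (σ₁ i, σ₂ i) := by
  have hrow : ∀ f, (tensorPow ρ *ᵥ Zvec N) f = ∑ g, Zvec N g * ∏ i, ρ (f i) (g i) := fun f =>
    Fintype.sum_congr _ _ fun g => mul_comm _ _
  simp only [star_Zvec, dotProduct, hrow, sum_Zvec_mul]
  simp only [Finset.mul_sum]
  refine Fintype.sum_congr _ _ fun τ₁ => Fintype.sum_congr _ _ fun τ₂ =>
    Fintype.sum_congr _ _ fun σ₁ => Fintype.sum_congr _ _ fun σ₂ => by ring

theorem QP_eq_dotProduct_tensorPow (ρ : Matrix (Fin N × Fin N) (Fin N × Fin N) ℂ) :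
    QP ρ = star (Zvec N) ⬝ᵥ (tensorPow ρ *ᵥ Zvec N) := by
  simp only [dotProduct_tensorPow_Zvec, ← QP_eq_sum_perm_mul, Finset.sum_const, Finset.card_univ,
    Fintype.card_perm, Fintype.card_fin, nsmul_eq_mul, ← mul_assoc,
    sqrt_factorial_inv_sq_mul_factorial, one_mul]

end QuantumPermanent

theorem QP_inner_product_and_monotone {N : ℕ} :
    (∀ ρ : Matrix (Fin N × Fin N) (Fin N × Fin N) ℂ, ρ.PosSemidef →
      QP ρ = ∑ f : Fin N → Fin N × Fin N,
        ((tensorPow ρ).mulVec (Zvec N) f) * (starRingEnd ℂ) (Zvec N f)) ∧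
    (∀ ρ₁ ρ₂ : Matrix (Fin N × Fin N) (Fin N × Fin N) ℂ,
      (ρ₁ - ρ₂).PosSemidef → ρ₂.PosSemidef → 0 ≤ QP ρ₂ ∧ QP ρ₂ ≤ QP ρ₁) := by
  refine ⟨fun ρ _ => by rw [sum_mulVec_mul_conj, QP_eq_dotProduct_tensorPow],
    fun ρ₁ ρ₂ hsub h₂ => ⟨?_, ?_⟩⟩
  · rw [QP_eq_dotProduct_tensorPow, tensorPow_eq_piKronecker]
    exact (PosSemidef.piKronecker fun _ => h₂).dotProduct_mulVec_nonneg _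
  · rw [← sub_nonneg, QP_eq_dotProduct_tensorPow, QP_eq_dotProduct_tensorPow, ← dotProduct_sub,
      ← sub_mulVec, tensorPow_eq_piKronecker, tensorPow_eq_piKronecker]
    exact (PosSemidef.piKronecker_sub (fun _ => h₂) fun _ => hsub).dotProduct_mulVec_nonneg _
end

section
/- Let x₁,…,x_K, y₁,…,y_K ∈ ℂ^N and let ρ_{(X,Y)} = Σ_{i=1}^K x_i x_i† ⊗ y_i y_i†. Then QP(ρ_{(X,Y)}) equals the matroidal permanent MP_{(X,Y)} = Σ_{1≤i₁<⋯<i_N≤K} det(Σ_k x_{i_k} x_{i_k}†) · det(Σ_k y_{i_k} y_{i_k}†). -/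
open Matrix Equiv
open scoped ComplexOrder

/-- The matroidal permanent
`MP_{(X,Y)} = Σ_{1≤i₁<⋯<i_N≤K} det(Σ_k x_{i_k} x_{i_k}†) · det(Σ_k y_{i_k} y_{i_k}†)`,
where the sum ranges over `N`-element subsets of `{1,…,K}`. -/
noncomputable def MP {N K : ℕ} (x y : Fin K → Fin N → ℂ) : ℂ :=
  ∑ s ∈ Finset.powersetCard N (Finset.univ : Finset (Fin K)),
    (∑ i ∈ s, vecMulVec (x i) (star (x i))).det *
      (∑ i ∈ s, vecMulVec (y i) (star (y i))).det

namespace QPsep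

variable {N K : ℕ}

/-- The `N × N` matrix whose `j`-th column is the vector `v (f j)`. -/
def colM (v : Fin K → Fin N → ℂ) (f : Fin N → Fin K) : Matrix (Fin N) (Fin N) ℂ :=
  Matrix.of fun i j => v (f j) i

/-- The summand attached to a choice function `f : Fin N → Fin K`. -/
noncomputable def T (x y : Fin K → Fin N → ℂ) (f : Fin N → Fin K) : ℂ :=
  (∏ i, x (f i) i) *
    ((colM y f).det * (starRingEnd ℂ ((colM x f).det) * starRingEnd ℂ ((colM y f).det)))

lemma det_colM (v : Fin K → Fin N → ℂ) (f : Fin N → Fin K) :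
    (colM v f).det = ∑ τ : Perm (Fin N), ((Perm.sign τ : ℤ) : ℂ) * ∏ i, v (f i) (τ i) :=
  Matrix.det_apply' _

lemma conj_det_colM (v : Fin K → Fin N → ℂ) (f : Fin N → Fin K) :
    starRingEnd ℂ ((colM v f).det)
      = ∑ τ : Perm (Fin N), ((Perm.sign τ : ℤ) : ℂ) * ∏ i, starRingEnd ℂ (v (f i) (τ i)) := by
  rw [det_colM, map_sum]
  refine Finset.sum_congr rfl fun τ _ => ?_
  rw [_root_.map_mul, map_prod, map_intCast]

lemma detT_colM (v : Fin K → Fin N → ℂ) (f : Fin N → Fin K) :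
    ∑ τ : Perm (Fin N), ((Perm.sign τ : ℤ) : ℂ) * ∏ i, v (f (τ i)) i = (colM v f).det := by
  rw [← Matrix.det_transpose, Matrix.det_apply']
  rfl

lemma triple (a : ℂ) (c₁ c₂ c₃ p q r : Perm (Fin N) → ℂ) :
    (∑ τ₁ : Perm (Fin N), ∑ τ₂ : Perm (Fin N), ∑ τ₃ : Perm (Fin N),
        (c₁ τ₁ * c₂ τ₂ * c₃ τ₃) * (a * q τ₂ * (p τ₁ * r τ₃)))
      = a * ((∑ τ₁ : Perm (Fin N), c₁ τ₁ * p τ₁) *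
          ((∑ τ₂ : Perm (Fin N), c₂ τ₂ * q τ₂) * (∑ τ₃ : Perm (Fin N), c₃ τ₃ * r τ₃))) := by
  rw [Finset.sum_mul_sum, Finset.sum_mul_sum]
  simp only [Finset.mul_sum]
  exact Finset.sum_congr rfl fun τ₁ _ => Finset.sum_congr rfl fun τ₂ _ =>
    Finset.sum_congr rfl fun τ₃ _ => by ring

lemma stepA (x y : Fin K → Fin N → ℂ)
    (ρ : Matrix (Fin N × Fin N) (Fin N × Fin N) ℂ)
    (hρ : ∀ i₁ i₂ j₁ j₂ : Fin N, ρ (i₁, i₂) (j₁, j₂) =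
      ∑ i : Fin K, x i i₁ * (starRingEnd ℂ) (x i j₁) * (y i i₂ * (starRingEnd ℂ) (y i j₂))) :
    (∑ τ₁ : Perm (Fin N), ∑ τ₂ : Perm (Fin N), ∑ τ₃ : Perm (Fin N),
      ((Perm.sign τ₁ : ℤ) * (Perm.sign τ₂ : ℤ) * (Perm.sign τ₃ : ℤ) : ℂ) *
        ∏ i : Fin N, ρ (i, τ₁ i) (τ₂ i, τ₃ i))
    = ∑ f : Fin N → Fin K, T x y f := by
  simp only [hρ, Fintype.prod_sum, Finset.mul_sum, Finset.prod_mul_distrib]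
  refine ((Finset.sum_congr rfl fun τ₁ _ => Finset.sum_congr rfl fun τ₂ _ =>
      Finset.sum_comm).trans ((Finset.sum_congr rfl fun τ₁ _ =>
      Finset.sum_comm).trans Finset.sum_comm)).trans ?_
  refine Finset.sum_congr rfl fun f _ => ?_
  calc (∑ τ₁ : Perm (Fin N), ∑ τ₂ : Perm (Fin N), ∑ τ₃ : Perm (Fin N),
        (((Perm.sign τ₁ : ℤ) : ℂ) * ((Perm.sign τ₂ : ℤ) : ℂ) * ((Perm.sign τ₃ : ℤ) : ℂ)) *
          ((∏ i, x (f i) i) * (∏ i, starRingEnd ℂ (x (f i) (τ₂ i))) *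
            ((∏ i, y (f i) (τ₁ i)) * (∏ i, starRingEnd ℂ (y (f i) (τ₃ i))))))
      = (∏ i, x (f i) i) *
          ((∑ τ₁ : Perm (Fin N), ((Perm.sign τ₁ : ℤ) : ℂ) * ∏ i, y (f i) (τ₁ i)) *
            ((∑ τ₂ : Perm (Fin N), ((Perm.sign τ₂ : ℤ) : ℂ) * ∏ i, starRingEnd ℂ (x (f i) (τ₂ i))) *
              (∑ τ₃ : Perm (Fin N), ((Perm.sign τ₃ : ℤ) : ℂ) * ∏ i, starRingEnd ℂ (y (f i) (τ₃ i))))) :=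
        triple _ _ _ _ _ _ _
    _ = T x y f := by rw [← det_colM, ← conj_det_colM, ← conj_det_colM]; rfl

lemma T_eq_zero (x y : Fin K → Fin N → ℂ) (f : Fin N → Fin K)
    (hf : ¬ Function.Injective f) : T x y f = 0 := by
  obtain ⟨i, j, hij, hne⟩ := Function.not_injective_iff.mp hf
  have : (colM y f).det = 0 :=
    Matrix.det_zero_of_column_eq hne fun k => by simp [colM, hij]
  simp [T, this]

lemma sum_perm_T (x y : Fin K → Fin N → ℂ) (g : Fin N → Fin K) :
    ∑ σ : Perm (Fin N), T x y (g ∘ σ)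
      = ((colM x g).det * starRingEnd ℂ ((colM x g).det)) *
          ((colM y g).det * starRingEnd ℂ ((colM y g).det)) := by
  have key : ∀ σ : Perm (Fin N), T x y (g ∘ σ)
      = (((Perm.sign σ : ℤ) : ℂ) * ∏ i, x (g (σ i)) i) *
          ((colM y g).det * (starRingEnd ℂ ((colM x g).det) * starRingEnd ℂ ((colM y g).det))) := by
    intro σ
    have hx : (colM x (g ∘ σ)).det = ((Perm.sign σ : ℤ) : ℂ) * (colM x g).det := by
      rw [show colM x (g ∘ σ) = (colM x g).submatrix id σ from rfl, Matrix.det_permute']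
    have hy : (colM y (g ∘ σ)).det = ((Perm.sign σ : ℤ) : ℂ) * (colM y g).det := by
      rw [show colM y (g ∘ σ) = (colM y g).submatrix id σ from rfl, Matrix.det_permute']
    have hs : ((Perm.sign σ : ℤ) : ℂ) * ((Perm.sign σ : ℤ) : ℂ) = 1 := by
      have h1 : ((Perm.sign σ : ℤ)) * ((Perm.sign σ : ℤ)) = 1 := by
        rw [← Units.val_mul, Int.units_mul_self]; rfl
      exact_mod_cast h1
    rw [T, hx, hy, _root_.map_mul, _root_.map_mul, map_intCast]
    simp only [Function.comp_apply]
    linear_combination (((Perm.sign σ : ℤ) : ℂ) * (∏ i, x (g (σ i)) i) * (colM y g).det *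
      starRingEnd ℂ ((colM x g).det) * starRingEnd ℂ ((colM y g).det)) * hs
  simp only [key]
  rw [← Finset.sum_mul, detT_colM]
  ring

lemma MP_term (s : Finset (Fin K)) (g : Fin N → Fin K) (hg : Function.Injective g)
    (hgs : Finset.image g Finset.univ = s) (v : Fin K → Fin N → ℂ) :
    (∑ i ∈ s, vecMulVec (v i) (star (v i))).det
      = (colM v g).det * starRingEnd ℂ ((colM v g).det) := by
  have hM : (∑ i ∈ s, vecMulVec (v i) (star (v i))) = colM v g * (colM v g)ᴴ := by
    ext i j
    rw [← hgs, Finset.sum_image (fun a _ b _ hab => hg hab)]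
    simp only [Matrix.sum_apply, Matrix.mul_apply, Matrix.conjTranspose_apply,
      vecMulVec_apply, colM, Matrix.of_apply, Pi.star_apply, starRingEnd_apply]
  rw [hM, Matrix.det_mul, Matrix.det_conjTranspose, starRingEnd_apply]

lemma enum_injective (s : Finset (Fin K)) (h : s.card = N) :
    Function.Injective (fun i => ((s.orderIsoOfFin h i : Fin K))) := by
  intro a b hab
  exact (s.orderIsoOfFin h).injective (Subtype.ext hab)

lemma enum_image (s : Finset (Fin K)) (h : s.card = N) :
    Finset.image (fun i => ((s.orderIsoOfFin h i : Fin K))) Finset.univ = s := by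
  ext a
  simp only [Finset.mem_image, Finset.mem_univ, true_and]
  constructor
  · rintro ⟨i, rfl⟩; exact (s.orderIsoOfFin h i).2
  · intro ha; exact ⟨(s.orderIsoOfFin h).symm ⟨a, ha⟩, by simp⟩

lemma fiber_sum (s : Finset (Fin K)) (h : s.card = N)
    (T' : (Fin N → Fin K) → ℂ) :
    ∑ f ∈ (Finset.univ.filter fun f : Fin N → Fin K => Function.Injective f).filter
        (fun f => Finset.image f Finset.univ = s), T' f
      = ∑ σ : Perm (Fin N), T' ((fun i => ((s.orderIsoOfFin h i : Fin K))) ∘ σ) := by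
  classical
  set g : Fin N → Fin K := fun i => ((s.orderIsoOfFin h i : Fin K)) with hgdef
  refine (Finset.sum_nbij (fun σ : Perm (Fin N) => g ∘ σ) ?_ ?_ ?_ ?_).symm
  · intro σ _
    simp only [Finset.mem_filter, Finset.mem_univ, true_and]
    refine ⟨(enum_injective s h).comp σ.injective, ?_⟩
    rw [show (g ∘ σ) = (g ∘ σ) from rfl, ← Finset.image_image,
      Finset.image_univ_equiv, enum_image]
  · intro σ _ σ' _ hh
    exact Equiv.ext fun i => enum_injective s h (congrFun hh i)
  · intro f hf
    simp only [Finset.coe_filter, Set.mem_setOf_eq, Finset.mem_filter, Finset.mem_univ,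
      true_and] at hf
    obtain ⟨hfi, hfs⟩ := hf
    have hmem : ∀ i, f i ∈ s := fun i => hfs ▸ Finset.mem_image_of_mem f (Finset.mem_univ i)
    have hu : Function.Injective (fun i => (s.orderIsoOfFin h).symm ⟨f i, hmem i⟩) := by
      intro a b hab
      exact hfi (congrArg Subtype.val ((s.orderIsoOfFin h).symm.injective hab))
    refine ⟨Equiv.ofBijective _ (Finite.injective_iff_bijective.mp hu), ?_, ?_⟩
    · simp
    · funext i
      simp [hgdef, Equiv.ofBijective_apply, ← Finset.coe_orderIsoOfFin_apply]
  · intro σ _; rfl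

lemma stepB (x y : Fin K → Fin N → ℂ) :
    ∑ f : Fin N → Fin K, T x y f = MP x y := by
  classical
  have h0 : ∑ f ∈ Finset.univ.filter (fun f : Fin N → Fin K => Function.Injective f), T x y f
      = ∑ f : Fin N → Fin K, T x y f :=
    Finset.sum_filter_of_ne fun f _ hne => by
      by_contra hc
      exact hne (T_eq_zero x y f hc)
  have hmaps : ∀ f ∈ Finset.univ.filter (fun f : Fin N → Fin K => Function.Injective f),
      Finset.image f Finset.univ ∈ Finset.powersetCard N (Finset.univ : Finset (Fin K)) := by
    intro f hf
    simp only [Finset.mem_filter, Finset.mem_univ, true_and] at hf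
    exact Finset.mem_powersetCard_univ.mpr
      (by rw [Finset.card_image_of_injective _ hf, Finset.card_univ, Fintype.card_fin])
  rw [← h0, ← Finset.sum_fiberwise_of_maps_to hmaps (T x y), MP]
  refine Finset.sum_congr rfl fun s hs => ?_
  have hcard : s.card = N := Finset.mem_powersetCard_univ.mp hs
  rw [fiber_sum s hcard (T x y), sum_perm_T,
    MP_term s _ (enum_injective s hcard) (enum_image s hcard) x,
    MP_term s _ (enum_injective s hcard) (enum_image s hcard) y]

end QPsep

theorem QP_separable_eq_MP {N K : ℕ} (x y : Fin K → Fin N → ℂ)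
    (ρ : Matrix (Fin N × Fin N) (Fin N × Fin N) ℂ)
    (hρ : ∀ i₁ i₂ j₁ j₂ : Fin N, ρ (i₁, i₂) (j₁, j₂) =
      ∑ i : Fin K, x i i₁ * (starRingEnd ℂ) (x i j₁) * (y i i₂ * (starRingEnd ℂ) (y i j₂))) :
    QP ρ = MP x y := by
  rw [QP, QPsep.stepA x y ρ hρ, QPsep.stepB]
end

section
/- Let T : M(N,ℂ) → M(N,ℂ) be a positive linear operator that is doubly stochastic, i.e., T(I) = I and T*(I) = I where T* is the adjoint with respect to the trace inner product. Then T is rank non-decreasing: rank(T(X)) ≥ rank(X) for all X ⪰ 0. -/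
open Matrix
open scoped ComplexOrder

/-!
Let `A = T X` and let `Q` be the orthogonal projection onto `ker A`, so `tr Q = N - rank A`.
The adjoint `T*` is again positive, hence `B = T* Q` satisfies `0 ≤ B ≤ 1` (because `T* 1 = 1`)
and therefore `tr B ≤ rank B`; and `tr B = tr (T 1 · Q) = tr Q` because `T 1 = 1`.
Finally `tr (X B) = tr (A Q) = 0` with `X, B ⪰ 0` forces `X B = 0`, so `rank X + rank B ≤ N`.
Altogether `rank X ≤ N - rank B ≤ N - tr Q = rank A`.
-/

namespace Matrix

variable {n 𝕜 : Type*} [Fintype n] [RCLike 𝕜]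

theorem trace_vecMulVec_star_mul (v : n → 𝕜) (A : Matrix n n 𝕜) :
    (vecMulVec v (star v) * A).trace = star v ⬝ᵥ (A *ᵥ v) := by
  rw [vecMulVec_mul, trace_vecMulVec, dotProduct_comm, dotProduct_mulVec]

section MatrixOrder

open scoped MatrixOrder

variable [DecidableEq n]

theorem PosSemidef.trace_mul_eq_trace_conjTranspose_mul_self {A B : Matrix n n 𝕜}
    (hA : A.PosSemidef) (hB : B.PosSemidef) :
    (A * B).trace = ((CFC.sqrt A * CFC.sqrt B)ᴴ * (CFC.sqrt A * CFC.sqrt B)).trace := by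
  rw [conjTranspose_mul, (CFC.sqrt_nonneg A).posSemidef.1.eq, (CFC.sqrt_nonneg B).posSemidef.1.eq,
    mul_assoc, ← mul_assoc (CFC.sqrt A), CFC.sqrt_mul_sqrt_self A hA.nonneg,
    trace_mul_comm (CFC.sqrt B), mul_assoc, CFC.sqrt_mul_sqrt_self B hB.nonneg]

theorem PosSemidef.trace_mul_nonneg {A B : Matrix n n 𝕜} (hA : A.PosSemidef)
    (hB : B.PosSemidef) : 0 ≤ (A * B).trace := by
  rw [hA.trace_mul_eq_trace_conjTranspose_mul_self hB]
  exact (posSemidef_conjTranspose_mul_self _).trace_nonneg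

theorem PosSemidef.trace_mul_eq_zero_iff {A B : Matrix n n 𝕜} (hA : A.PosSemidef)
    (hB : B.PosSemidef) : (A * B).trace = 0 ↔ A * B = 0 := by
  refine ⟨fun h ↦ ?_, fun h ↦ by rw [h, trace_zero]⟩
  rw [hA.trace_mul_eq_trace_conjTranspose_mul_self hB,
    trace_conjTranspose_mul_self_eq_zero_iff] at h
  rw [← CFC.sqrt_mul_sqrt_self A hA.nonneg, ← CFC.sqrt_mul_sqrt_self B hB.nonneg, mul_assoc,
    ← mul_assoc (CFC.sqrt A) (CFC.sqrt B), h, zero_mul, mul_zero]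

theorem PosSemidef.re_trace_le_rank {B : Matrix n n 𝕜} (hB : B.PosSemidef)
    (hB₁ : (1 - B).PosSemidef) : RCLike.re B.trace ≤ B.rank := by
  have hle : ∀ i, hB.1.eigenvalues i ≤ 1 := fun i ↦
    (CFC.le_one_iff B hB.1.isSelfAdjoint).mp (le_iff.mpr hB₁) _
      (hB.1.eigenvalues_mem_spectrum_real i)
  rw [hB.1.trace_eq_sum_eigenvalues, hB.1.rank_eq_card_non_zero_eigs, Fintype.card_subtype,
    map_sum, Finset.natCast_card_filter]
  refine Finset.sum_le_sum fun i _ ↦ ?_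
  by_cases h : hB.1.eigenvalues i = 0 <;> simp [h, hle i]

end MatrixOrder

theorem IsHermitian.exists_kernel_projection [DecidableEq n] {A : Matrix n n 𝕜}
    (hA : A.IsHermitian) :
    ∃ Q : Matrix n n 𝕜, Q.PosSemidef ∧ (1 - Q).PosSemidef ∧ A * Q = 0 ∧
      Q.trace + A.rank = Fintype.card n := by
  set U := hA.eigenvectorUnitary
  set g : n → 𝕜 := fun i ↦ if hA.eigenvalues i = 0 then 1 else 0
  have hg : ∀ i, 0 ≤ g i ∧ 0 ≤ 1 - g i := fun i ↦ by
    by_cases h : hA.eigenvalues i = 0 <;> simp [g, h]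
  have hconj : ∀ D : Matrix n n 𝕜, D.PosSemidef →
      (Unitary.conjStarAlgAut 𝕜 _ U D).PosSemidef := fun D hD ↦ by
    simpa [star_eq_conjTranspose] using hD.mul_mul_conjTranspose_same (U : Matrix n n 𝕜)
  refine ⟨Unitary.conjStarAlgAut 𝕜 _ U (diagonal g), ?_, ?_, ?_, ?_⟩
  · exact hconj _ (posSemidef_diagonal_iff.mpr fun i ↦ (hg i).1)
  · rw [← map_one (Unitary.conjStarAlgAut 𝕜 _ U), ← map_sub, ← diagonal_one, diagonal_sub]
    exact hconj _ (posSemidef_diagonal_iff.mpr fun i ↦ (hg i).2)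
  · conv_lhs => rw [hA.spectral_theorem]
    rw [← map_mul, diagonal_mul_diagonal, ← map_zero (Unitary.conjStarAlgAut 𝕜 _ U),
      ← diagonal_zero]
    congr 2
    ext i
    by_cases h : hA.eigenvalues i = 0 <;> simp [g, h]
  · rw [Unitary.conjStarAlgAut_apply, trace_mul_cycle, Unitary.coe_star_mul_self, one_mul,
      trace_diagonal, hA.rank_eq_card_non_zero_eigs, Fintype.card_subtype]
    simp only [g, Finset.sum_boole, ← Nat.cast_add, Finset.card_filter_add_card_filter_not,
      Finset.card_univ]

theorem posSemidef_of_forall_dotProduct_mulVec_nonneg {M : Matrix n n ℂ}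
    (h : ∀ x, 0 ≤ star x ⬝ᵥ (M *ᵥ x)) : M.PosSemidef := by
  classical
  rw [← isPositive_toEuclideanLin_iff, LinearMap.isPositive_iff_complex]
  intro x
  have hx := h x.ofLp
  have hq : inner ℂ (M.toEuclideanLin x) x = star x.ofLp ⬝ᵥ (M *ᵥ x.ofLp) := by
    rw [EuclideanSpace.inner_eq_star_dotProduct, ← (IsSelfAdjoint.of_nonneg hx).star_eq,
      star_dotProduct, star_star]
    simpa using dotProduct_comm _ _
  rw [hq]
  exact ⟨RCLike.conj_eq_iff_re.mp (IsSelfAdjoint.of_nonneg hx).star_eq,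
    (RCLike.nonneg_iff.mp hx).1⟩

theorem posSemidef_apply_of_trace_adjoint {T S : Matrix n n ℂ → Matrix n n ℂ}
    (hT : ∀ X, X.PosSemidef → (T X).PosSemidef)
    (hTS : ∀ X Y, (T X * Yᴴ).trace = (X * (S Y)ᴴ).trace) {Y : Matrix n n ℂ}
    (hY : Y.PosSemidef) : (S Y).PosSemidef := by
  classical
  refine posSemidef_conjTranspose_iff.mp <|
    posSemidef_of_forall_dotProduct_mulVec_nonneg fun v ↦ ?_
  rw [← trace_vecMulVec_star_mul, ← hTS, hY.1.eq]
  exact (hT _ (posSemidef_vecMulVec_self_star v)).trace_mul_nonneg hY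

end Matrix

theorem doublyStochastic_rank_nondecreasing {N : ℕ}
    (T Tadj : Matrix (Fin N) (Fin N) ℂ →ₗ[ℂ] Matrix (Fin N) (Fin N) ℂ)
    (hpos : ∀ X : Matrix (Fin N) (Fin N) ℂ, X.PosSemidef → (T X).PosSemidef)
    (hadj : ∀ X Y : Matrix (Fin N) (Fin N) ℂ,
      Matrix.trace (T X * Yᴴ) = Matrix.trace (X * (Tadj Y)ᴴ))
    (hTI : T 1 = 1) (hTadjI : Tadj 1 = 1)
    (X : Matrix (Fin N) (Fin N) ℂ) (hX : X.PosSemidef) :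
    X.rank ≤ (T X).rank := by
  obtain ⟨Q, hQ, hQ₁, hQker, hQtrace⟩ := (hpos X hX).isHermitian.exists_kernel_projection
  have hB : (Tadj Q).PosSemidef := posSemidef_apply_of_trace_adjoint hpos hadj hQ
  have hB₁ : (1 - Tadj Q).PosSemidef := by
    simpa [hTadjI] using posSemidef_apply_of_trace_adjoint hpos hadj hQ₁
  have hBtrace : (Tadj Q).trace = Q.trace := by
    simpa [hTI, hQ.1.eq, hB.1.eq] using (hadj 1 Q).symm
  have hXB : X * Tadj Q = 0 := by
    rw [← hX.trace_mul_eq_zero_iff hB, ← hB.1.eq, ← hadj, hQ.1.eq, hQker, trace_zero]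
  have hrank : (X.rank : ℝ) + (Tadj Q).rank ≤ N := by
    exact_mod_cast (by simpa using rank_add_rank_le_card_of_mul_eq_zero hXB)
  have hBrank := hBtrace ▸ hB.re_trace_le_rank hB₁
  have hQrank : RCLike.re Q.trace + (T X).rank = N := by
    simpa using congrArg RCLike.re hQtrace
  exact_mod_cast (by linarith : (X.rank : ℝ) ≤ (T X).rank)
end

section
/- For a positive semidefinite N×N matrix X and rank-one matrices x_i y_i† (x_i, y_i ∈ ℂ^N, 1 ≤ i ≤ K), one has det( Σ_{i=1}^K x_i y_i† X y_i x_i† ) ≥ det(X) · MP_{(X,Y)}, where MP_{(X,Y)} = Σ_{1≤i₁<⋯<i_N≤K} det(Σ_k x_{i_k}x_{i_k}†)·det(Σ_k y_{i_k}y_{i_k}†). -/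
open Matrix
open scoped ComplexOrder

/-!
Each summand equals `(y_i† X y_i) • x_i x_i†`. Expanding the determinant multilinearly in its
rows, only injective choices of row indices survive, and grouping them by their image gives a
Cauchy–Binet formula: the right-hand side is
`∑_{|S| = N} (∏_{i ∈ S} y_i† X y_i) · det(∑_{i ∈ S} x_i x_i†)`.
For each such `S`, let `Y` be the matrix with columns `y_i`; Hadamard's inequality for `Y† X Y`
gives `det X · det(∑_{i ∈ S} y_i y_i†) = det(Y† X Y) ≤ ∏_{i ∈ S} y_i† X y_i`, and the claim
follows termwise since `det(∑_{i ∈ S} x_i x_i†) ≥ 0`. Hadamard's inequality itself reduces, after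
rescaling to unit diagonal, to `∏ λ_i ≤ exp ∑ (λ_i - 1) = 1` for the eigenvalues, whose sum is
the trace.
-/

theorem Real.prod_le_exp_sum_sub_one {ι : Type*} (s : Finset ι) (μ : ι → ℝ)
    (hμ : ∀ i ∈ s, 0 ≤ μ i) : ∏ i ∈ s, μ i ≤ Real.exp (∑ i ∈ s, (μ i - 1)) := by
  rw [Real.exp_sum]
  exact Finset.prod_le_prod hμ fun i _ => by linarith [Real.add_one_le_exp (μ i - 1)]

namespace Matrix

open Finset

theorem vecMulVec_mul_mul_vecMulVec {R l m n : Type*} [CommSemiring R] [Fintype m]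
    (u : l → R) (v w : m → R) (A : Matrix m m R) (z : n → R) :
    vecMulVec u v * A * vecMulVec w z = (v ⬝ᵥ A *ᵥ w) • vecMulVec u z := by
  rw [vecMulVec_mul, vecMulVec_mul_vecMulVec, ← dotProduct_mulVec, vecMulVec_smul]

section CauchyBinet

variable {R n ι : Type*} [Fintype n] [DecidableEq n] [Fintype ι]

theorem det_sum_smul_vecMulVec_eq_sum_fun [CommRing R] (c : ι → R) (x w : ι → n → R) :
    (∑ i, c i • vecMulVec (x i) (w i)).det =
      ∑ r : n → ι, (∏ j, c (r j)) * ((∏ j, x (r j) j) * ((of w).submatrix r id).det) := by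
  have hrows : ∑ i, c i • vecMulVec (x i) (w i) = of fun j => ∑ i, (c i * x i j) • w i := by
    ext j l
    simp [vecMulVec_apply, sum_apply, mul_assoc]
  rw [hrows]
  change detRowAlternating.toMultilinearMap (fun j => ∑ i, (c i * x i j) • w i) = _
  rw [MultilinearMap.map_sum]
  refine sum_congr rfl fun r _ => ?_
  rw [MultilinearMap.map_smul_univ, prod_mul_distrib, smul_eq_mul, mul_assoc]
  rfl

theorem sum_fun_eq_sum_powersetCard [CommSemiring R] [DecidableEq ι] (c : ι → R)
    (F : (n → ι) → R) (hF : ∀ r, ¬ Function.Injective r → F r = 0) :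
    ∑ r : n → ι, (∏ j, c (r j)) * F r =
      ∑ s ∈ powersetCard (Fintype.card n) univ,
        (∏ i ∈ s, c i) * ∑ r with univ.image r = s, F r := by
  rw [← sum_fiberwise univ (fun r : n → ι => univ.image r),
    ← sum_subset (subset_univ (powersetCard (Fintype.card n) univ))]
  · refine sum_congr rfl fun s hs => ?_
    rw [mul_sum]
    refine sum_congr rfl fun r hr => ?_
    rw [mem_filter] at hr
    have hinj : Function.Injective r := by
      rw [← Set.injOn_univ, ← coe_univ, ← card_image_iff, hr.2, (mem_powersetCard.1 hs).2,
        card_univ]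
    rw [← hr.2, prod_image hinj.injOn]
  · intro s _ hs
    refine sum_eq_zero fun r hr => ?_
    rw [hF r fun hinj => hs ?_, mul_zero]
    rw [mem_powersetCard, ← (mem_filter.1 hr).2, card_image_of_injective _ hinj, card_univ]
    exact ⟨subset_univ _, rfl⟩

theorem det_sum_smul_vecMulVec [CommRing R] (c : ι → R) (x w : ι → n → R) :
    (∑ i, c i • vecMulVec (x i) (w i)).det =
      ∑ s ∈ powersetCard (Fintype.card n) univ,
        (∏ i ∈ s, c i) * (∑ i ∈ s, vecMulVec (x i) (w i)).det := by
  classical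
  set G : Finset ι → R := fun s =>
    ∑ r with univ.image r = s, (∏ j, x (r j) j) * ((of w).submatrix r id).det
  have hexpand : ∀ c : ι → R, (∑ i, c i • vecMulVec (x i) (w i)).det =
      ∑ s ∈ powersetCard (Fintype.card n) univ, (∏ i ∈ s, c i) * G s := fun c => by
    rw [det_sum_smul_vecMulVec_eq_sum_fun, sum_fun_eq_sum_powersetCard]
    intro r hr
    obtain ⟨a, b, hab, hne⟩ := Function.not_injective_iff.1 hr
    rw [det_zero_of_row_eq hne (funext fun l => by simp [hab]), mul_zero]
  have hminor : ∀ t ∈ powersetCard (Fintype.card n) univ,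
      (∑ i ∈ t, vecMulVec (x i) (w i)).det = G t := by
    intro t ht
    -- the expansion at the indicator of `t`: only `s = t` has `s ⊆ t` among `N`-sets
    have := hexpand fun i => if i ∈ t then 1 else 0
    simp only [ite_smul, one_smul, zero_smul, sum_ite_mem, univ_inter, prod_boole] at this
    rw [this, sum_eq_single_of_mem t ht fun s hs hne => ?_]
    · simp
    · rw [if_neg, zero_mul]
      intro hsub
      exact hne (eq_of_subset_of_card_le hsub
        (by rw [(mem_powersetCard.1 hs).2, (mem_powersetCard.1 ht).2]))
  rw [hexpand]
  exact sum_congr rfl fun s hs => by rw [hminor s hs]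

end CauchyBinet

namespace PosSemidef

variable {𝕜 n : Type*} [RCLike 𝕜] [Fintype n] [DecidableEq n] {M : Matrix n n 𝕜}

theorem det_le_one_of_diag_eq_one (hM : M.PosSemidef) (h : ∀ i, M i i = 1) : M.det ≤ 1 := by
  have htrace : ∑ i, (hM.1.eigenvalues i - 1) = 0 := by
    have := hM.1.trace_eq_sum_eigenvalues
    simp only [trace, diag_apply, h, sum_const, card_univ, nsmul_eq_mul, mul_one] at this
    rw [sum_sub_distrib, sum_const, card_univ, nsmul_eq_mul, mul_one, sub_eq_zero]
    exact_mod_cast this.symm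
  rw [hM.1.det_eq_prod_eigenvalues, ← RCLike.ofReal_prod, ← RCLike.ofReal_one,
    RCLike.ofReal_le_ofReal]
  calc ∏ i, hM.1.eigenvalues i ≤ Real.exp (∑ i, (hM.1.eigenvalues i - 1)) :=
        Real.prod_le_exp_sum_sub_one _ _ fun i _ => hM.eigenvalues_nonneg i
    _ = 1 := by rw [htrace, Real.exp_zero]

theorem det_eq_zero_of_diag_eq_zero (hM : M.PosSemidef) {i : n} (h : M i i = 0) : M.det = 0 := by
  have hcol : M *ᵥ Pi.single i 1 = 0 :=
    (hM.dotProduct_mulVec_zero_iff _).1 (by simpa using h)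
  exact det_eq_zero_of_column_eq_zero i fun j => by simpa using congrFun hcol j

theorem det_le_prod_diag (hM : M.PosSemidef) : M.det ≤ ∏ i, M i i := by
  by_cases hzero : ∃ i, M i i = 0
  · obtain ⟨i, hi⟩ := hzero
    rw [hM.det_eq_zero_of_diag_eq_zero hi]
    exact prod_nonneg fun i _ => hM.diag_nonneg
  simp only [not_exists] at hzero
  set d : n → ℝ := fun i => √(RCLike.re (M i i))
  have hd : ∀ i, (d i : 𝕜) * d i = M i i := fun i => by
    rw [← RCLike.ofReal_mul, Real.mul_self_sqrt (RCLike.nonneg_iff.1 hM.diag_nonneg).1,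
      hM.1.coe_re_apply_self]
  have hd0 : ∀ i, (d i : 𝕜) ≠ 0 := fun i h => hzero i (by rw [← hd i, h, zero_mul])
  set D : Matrix n n 𝕜 := diagonal fun i => (d i : 𝕜)
  set E : Matrix n n 𝕜 := diagonal fun i => (d i : 𝕜)⁻¹
  have hN : (E * M * E).PosSemidef := by
    simpa [E, diagonal_conjTranspose, Pi.star_def, RCLike.star_def] using
      hM.mul_mul_conjTranspose_same E
  have hNdiag : ∀ i, (E * M * E) i i = 1 := fun i => by
    simp [E, diagonal_mul, mul_diagonal, ← hd i, hd0 i]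
  have hDE : D * E = 1 := by simp [D, E, diagonal_mul_diagonal, hd0]
  have hED : E * D = 1 := by simp [D, E, diagonal_mul_diagonal, hd0]
  have hdet : M.det = (E * M * E).det * ∏ i, M i i := by
    have : M = D * (E * M * E) * D := by
      rw [← Matrix.mul_assoc, ← Matrix.mul_assoc, hDE, Matrix.one_mul, Matrix.mul_assoc, hED,
        Matrix.mul_one]
    conv_lhs => rw [this]
    rw [det_mul, det_mul, det_diagonal, ← prod_congr rfl fun i _ => hd i, prod_mul_distrib]
    ring
  rw [hdet]
  exact mul_le_of_le_one_left (prod_nonneg fun i _ => hM.diag_nonneg)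
    (hN.det_le_one_of_diag_eq_one hNdiag)

theorem det_mul_det_sum_vecMulVec_le {X : Matrix n n 𝕜} (hX : X.PosSemidef) (v : n → n → 𝕜) :
    X.det * (∑ k, vecMulVec (v k) (star (v k))).det ≤ ∏ k, star (v k) ⬝ᵥ X *ᵥ v k := by
  set Y : Matrix n n 𝕜 := (of v)ᵀ
  have hYY : Y * Yᴴ = ∑ k, vecMulVec (v k) (star (v k)) := by
    ext i j
    simp [Y, mul_apply, vecMulVec_apply, sum_apply]
  have hdiag : ∀ k, (Yᴴ * X * Y) k k = star (v k) ⬝ᵥ X *ᵥ v k := fun k => by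
    simp [Y, mul_apply, dotProduct, mulVec, sum_mul, mul_sum, mul_assoc]
    exact sum_comm
  calc X.det * (∑ k, vecMulVec (v k) (star (v k))).det = (Yᴴ * X * Y).det := by
        rw [← hYY, det_mul, det_mul, det_mul, det_conjTranspose]
        ring
    _ ≤ ∏ k, (Yᴴ * X * Y) k k := (hX.conjTranspose_mul_mul_same Y).det_le_prod_diag
    _ = ∏ k, star (v k) ⬝ᵥ X *ᵥ v k := prod_congr rfl fun k _ => hdiag k

theorem det_mul_det_sum_vecMulVec_le_of_card_eq {ι : Type*} {X : Matrix n n 𝕜}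
    (hX : X.PosSemidef) (v : ι → n → 𝕜) {s : Finset ι} (hs : s.card = Fintype.card n) :
    X.det * (∑ i ∈ s, vecMulVec (v i) (star (v i))).det ≤ ∏ i ∈ s, star (v i) ⬝ᵥ X *ᵥ v i := by
  let e : n ≃ s := Fintype.equivOfCardEq (by rw [Fintype.card_coe, hs])
  have := hX.det_mul_det_sum_vecMulVec_le fun k => v (e k)
  rw [e.sum_comp fun i : s => vecMulVec (v i) (star (v i)),
    e.prod_comp fun i : s => star (v i) ⬝ᵥ X *ᵥ v i] at this
  rwa [← sum_coe_sort s, ← prod_coe_sort s]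

end PosSemidef

end Matrix

theorem det_separable_image_lower_bound {N K : ℕ} (x y : Fin K → Fin N → ℂ)
    (X : Matrix (Fin N) (Fin N) ℂ) (hX : X.PosDef) :
    X.det * MP x y ≤
      (∑ i : Fin K,
        vecMulVec (x i) (star (y i)) * X * vecMulVec (y i) (star (x i))).det := by
  simp_rw [vecMulVec_mul_mul_vecMulVec]
  rw [det_sum_smul_vecMulVec, Fintype.card_fin, MP, Finset.mul_sum]
  refine Finset.sum_le_sum fun s hs => ?_
  have hcard : s.card = Fintype.card (Fin N) := by
    rw [(Finset.mem_powersetCard.1 hs).2, Fintype.card_fin]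
  have hx : (∑ i ∈ s, vecMulVec (x i) (star (x i))).PosSemidef :=
    posSemidef_sum s fun i _ => posSemidef_vecMulVec_self_star (x i)
  rw [mul_left_comm, mul_comm (∏ i ∈ s, _)]
  exact mul_le_mul_of_nonneg_left
    (hX.posSemidef.det_mul_det_sum_vecMulVec_le_of_card_eq y hcard) hx.det_nonneg
end

section
/- Let T_{(X,Y)}(Z) = Σ_{i=1}^K x_i y_i† Z y_i x_i† be a separable completely positive operator on M(N,ℂ). Suppose T_{(X,Y)} is rank non-decreasing (rank(T(Z)) ≥ rank(Z) for all Z ⪰ 0). Then the intersection of the two geometric matroids defined by (x_i) and (y_i) has rank N; i.e., there exist indices i₁ < ⋯ < i_N such that {x_{i₁},…,x_{i_N}} and {y_{i₁},…,y_{i_N}} are each linearly independent. -/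
/-!
Edmonds' criterion for two linear matroids on the same ground set: there is a common
independent set of size `n` as soon as `n ≤ r_x(A) + r_y(E \ A)` for every `A ⊆ E`. By induction
on `E`: if the criterion survives deleting an element `e`, delete it; otherwise a violating set
`A₀` together with submodularity of both rank functions shows that it survives, with `n - 1`,
contracting `e` (passing to the quotients by `x e` and `y e`).

The criterion holds for `n = N` whenever `T` is rank non-decreasing: take `Z ⪰ 0` with kernel
`span {y j | j ∉ A}`. Then `T Z = ∑ (y iᴴ Z y i) • x i x iᴴ` only involves the `x i` with `i ∈ A`,
so `N - r_y(Aᶜ) = rank Z ≤ rank (T Z) ≤ r_x(A)`.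
-/

open Matrix
open scoped ComplexOrder

open Module Submodule Set

section Contraction

variable {𝕜 V ι : Type*} [Field 𝕜] [AddCommGroup V] [Module 𝕜 V]

theorem finrank_map_mkQ_add_finrank [FiniteDimensional 𝕜 V] {W U : Submodule 𝕜 V}
    (hWU : W ≤ U) : finrank 𝕜 (U.map W.mkQ) + finrank 𝕜 W = finrank 𝕜 U := by
  have h := LinearMap.finrank_range_add_finrank_ker (W.mkQ ∘ₗ U.subtype)
  rwa [LinearMap.range_comp, range_subtype, LinearMap.ker_comp, ker_mkQ,
    (comapSubtypeEquivOfLe hWU).finrank_eq] at h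

theorem finrank_image_mkQ_comp_add_one [FiniteDimensional 𝕜 V] {x : ι → V} {e : ι}
    (hx : x e ≠ 0) (B : Set ι) :
    (((span 𝕜 {x e}).mkQ ∘ x) '' B).finrank 𝕜 + 1 = (x '' insert e B).finrank 𝕜 := by
  have h := finrank_map_mkQ_add_finrank (le_sup_left (a := span 𝕜 {x e}) (b := span 𝕜 (x '' B)))
  rwa [Submodule.map_sup, mkQ_map_self, bot_sup_eq, finrank_span_singleton hx, ← span_insert,
    ← image_insert_eq, map_span, ← image_comp] at h

theorem finrank_image_insert_of_eq_zero {x : ι → V} {e : ι} (hx : x e = 0) (B : Set ι) :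
    (x '' insert e B).finrank 𝕜 = (x '' B).finrank 𝕜 := by
  rw [image_insert_eq, hx, Set.finrank, Set.finrank, span_insert_zero]

theorem LinearIndepOn.insert_of_mkQ_comp {x : ι → V} {e : ι} {S : Set ι} (hx : x e ≠ 0)
    (hS : LinearIndepOn 𝕜 ((span 𝕜 {x e}).mkQ ∘ x) S) : LinearIndepOn 𝕜 x (insert e S) := by
  have h := (LinearIndepOn.singleton (R := 𝕜) hx).union_of_quotient (t := S)
    (by rwa [image_singleton])
  rwa [singleton_union] at h

theorem finrank_image_union_add_finrank_image_inter_le [FiniteDimensional 𝕜 V] (x : ι → V)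
    (A B : Set ι) :
    (x '' (A ∪ B)).finrank 𝕜 + (x '' (A ∩ B)).finrank 𝕜
      ≤ (x '' A).finrank 𝕜 + (x '' B).finrank 𝕜 := by
  have hmod := Submodule.finrank_sup_add_finrank_inf_eq (span 𝕜 (x '' A)) (span 𝕜 (x '' B))
  have hinter : (x '' (A ∩ B)).finrank 𝕜 ≤ finrank 𝕜 ↥(span 𝕜 (x '' A) ⊓ span 𝕜 (x '' B)) :=
    Submodule.finrank_mono (le_inf (span_mono (image_mono inter_subset_left))
      (span_mono (image_mono inter_subset_right)))
  unfold Set.finrank at hinter ⊢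
  rw [image_union, span_union]
  omega

end Contraction

section MatroidIntersection

variable {𝕜 V₁ V₂ ι : Type*} [Field 𝕜] [AddCommGroup V₁] [Module 𝕜 V₁] [FiniteDimensional 𝕜 V₁]
  [AddCommGroup V₂] [Module 𝕜 V₂] [FiniteDimensional 𝕜 V₂]

/-- Add submodularity of `r_x` at `A₀, insert e B` to that of `r_y` at `E \ A₀, insert e (E \ B)`:
the four sets on the left are the criterion's sets `A₀ ∩ B` and `A₀ ∪ insert e B` with their
complements in `insert e E`. -/
theorem add_one_le_finrank_image_insert_add_finrank_image_insert {x : ι → V₁} {y : ι → V₂}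
    {E A₀ B : Set ι} {e : ι} {n : ℕ}
    (h : ∀ A ⊆ insert e E, n ≤ (x '' A).finrank 𝕜 + (y '' (insert e E \ A)).finrank 𝕜)
    (he : e ∉ E) (hA₀ : A₀ ⊆ E) (hA₀n : (x '' A₀).finrank 𝕜 + (y '' (E \ A₀)).finrank 𝕜 < n)
    (hB : B ⊆ E) :
    n + 1 ≤ (x '' insert e B).finrank 𝕜 + (y '' insert e (E \ B)).finrank 𝕜 := by
  have heA₀ : e ∉ A₀ := fun h => he (hA₀ h)
  have heB : e ∉ B := fun h => he (hB h)
  have hx := finrank_image_union_add_finrank_image_inter_le (𝕜 := 𝕜) x A₀ (insert e B)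
  have hy := finrank_image_union_add_finrank_image_inter_le (𝕜 := 𝕜) y (E \ A₀) (insert e (E \ B))
  have h₁ := h (A₀ ∩ B) (inter_subset_left.trans (hA₀.trans (subset_insert e E)))
  have h₂ := h (A₀ ∪ insert e B) (union_subset (hA₀.trans (subset_insert e E))
    (insert_subset_insert hB))
  have hx_inter : A₀ ∩ insert e B = A₀ ∩ B := by
    ext i; simp only [mem_inter_iff, mem_insert_iff]; grind
  have hy_union : E \ A₀ ∪ insert e (E \ B) = insert e E \ (A₀ ∩ B) := by
    ext i; simp only [mem_union, mem_sdiff, mem_insert_iff, mem_inter_iff]; grind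
  have hy_inter : E \ A₀ ∩ insert e (E \ B) = insert e E \ (A₀ ∪ insert e B) := by
    ext i; simp only [mem_union, mem_sdiff, mem_insert_iff, mem_inter_iff]; grind
  rw [hx_inter] at hx
  rw [hy_union, hy_inter] at hy
  omega

theorem exists_finset_card_eq_linearIndepOn_of_le_finrank_add_finrank [DecidableEq ι]
    (x : ι → V₁) (y : ι → V₂) (E : Finset ι) (n : ℕ)
    (h : ∀ A ⊆ (E : Set ι), n ≤ (x '' A).finrank 𝕜 + (y '' (E \ A)).finrank 𝕜) :
    ∃ S ⊆ E, S.card = n ∧ LinearIndepOn 𝕜 x S ∧ LinearIndepOn 𝕜 y S := by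
  induction E using Finset.induction_on generalizing V₁ V₂ n with
  | empty =>
    have h₀ := h ∅ (empty_subset _)
    simp only [Finset.coe_empty, image_empty, sdiff_self, Set.finrank_empty] at h₀
    exact ⟨∅, Finset.empty_subset _, by rw [Finset.card_empty]; omega, by simp, by simp⟩
  | insert e E he ih =>
    by_cases hE : ∀ A ⊆ (E : Set ι), n ≤ (x '' A).finrank 𝕜 + (y '' (E \ A)).finrank 𝕜
    · obtain ⟨S, hSE, hS⟩ := ih x y n hE
      exact ⟨S, hSE.trans (Finset.subset_insert e E), hS⟩
    push Not at hE
    obtain ⟨A₀, hA₀, hA₀n⟩ := hE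
    rw [Finset.coe_insert] at h
    have hxe : x e ≠ 0 := by
      intro hxe
      have h₁ := h (insert e A₀) (insert_subset_insert hA₀)
      rw [finrank_image_insert_of_eq_zero hxe, insert_sdiff_of_mem _ (mem_insert e A₀),
        sdiff_insert_of_notMem he] at h₁
      omega
    have hye : y e ≠ 0 := by
      intro hye
      have h₁ := h A₀ (hA₀.trans (subset_insert e E))
      rw [insert_sdiff_of_notMem _ fun h => he (hA₀ h), finrank_image_insert_of_eq_zero hye] at h₁
      omega
    obtain ⟨S, hSE, hScard, hSx, hSy⟩ := ih ((span 𝕜 {x e}).mkQ ∘ x)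
      ((span 𝕜 {y e}).mkQ ∘ y) (n - 1) fun B hB => by
        have hB' := add_one_le_finrank_image_insert_add_finrank_image_insert h he hA₀ hA₀n hB
        have hx := finrank_image_mkQ_comp_add_one (𝕜 := 𝕜) hxe B
        have hy := finrank_image_mkQ_comp_add_one (𝕜 := 𝕜) hye (↑E \ B)
        omega
    have heS : e ∉ S := fun h => he (hSE h)
    refine ⟨insert e S, Finset.insert_subset_insert e hSE, ?_, ?_, ?_⟩
    · rw [Finset.card_insert_of_notMem heS]
      omega
    · rw [Finset.coe_insert]
      exact hSx.insert_of_mkQ_comp hxe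
    · rw [Finset.coe_insert]
      exact hSy.insert_of_mkQ_comp hye

end MatroidIntersection

section PositiveMaps

variable {𝕜 n : Type*} [Field 𝕜] [Fintype n]

theorem Matrix.exists_posSemidef_ker_mulVecLin_eq [PartialOrder 𝕜] [StarRing 𝕜]
    [StarOrderedRing 𝕜] [DecidableEq n] (W : Submodule 𝕜 (n → 𝕜)) :
    ∃ Z : Matrix n n 𝕜, Z.PosSemidef ∧ LinearMap.ker Z.mulVecLin = W := by
  obtain ⟨U, hWU⟩ := W.exists_isCompl
  set C := LinearMap.toMatrix' (U.projection W hWU.symm)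
  refine ⟨Cᴴ * C, posSemidef_conjTranspose_mul_self C, ?_⟩
  rw [ker_mulVecLin_conjTranspose_mul_self, ← Matrix.toLin'_apply', Matrix.toLin'_toMatrix',
    ker_projection]

theorem Matrix.rank_sum_vecMulVec_mul_mul_vecMulVec_le [StarRing 𝕜] {ι : Type*} [Fintype ι]
    (x y : ι → n → 𝕜) (Z : Matrix n n 𝕜) (A : Set ι) (hZ : ∀ i ∉ A, Z *ᵥ y i = 0) :
    (∑ i, vecMulVec (x i) (star (y i)) * Z * vecMulVec (y i) (star (x i))).rank
      ≤ (x '' A).finrank 𝕜 := by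
  refine Submodule.finrank_mono ?_
  rintro - ⟨v, rfl⟩
  rw [mulVecLin_apply, sum_mulVec]
  refine sum_mem fun i _ => ?_
  rw [Matrix.mul_assoc, mul_vecMulVec]
  by_cases hi : i ∈ A
  · rw [vecMulVec_mul_vecMulVec, vecMulVec_mulVec, op_smul_eq_smul]
    exact smul_mem _ _ (subset_span (mem_image_of_mem x hi))
  · rw [hZ i hi, zero_vecMulVec, Matrix.mul_zero, zero_mulVec]
    exact zero_mem _

theorem le_finrank_image_add_finrank_image_compl_of_rank_le [PartialOrder 𝕜] [StarRing 𝕜]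
    [StarOrderedRing 𝕜] [DecidableEq n] {ι : Type*} [Fintype ι] (x y : ι → n → 𝕜)
    (hrank : ∀ Z : Matrix n n 𝕜, Z.PosSemidef →
      Z.rank ≤ (∑ i, vecMulVec (x i) (star (y i)) * Z * vecMulVec (y i) (star (x i))).rank)
    (A : Set ι) :
    Fintype.card n ≤ (x '' A).finrank 𝕜 + (y '' Aᶜ).finrank 𝕜 := by
  obtain ⟨Z, hZ, hker⟩ := exists_posSemidef_ker_mulVecLin_eq (span 𝕜 (y '' Aᶜ))
  have hZy : ∀ i ∉ A, Z *ᵥ y i = 0 := fun i hi => by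
    rw [← mulVecLin_apply, ← LinearMap.mem_ker, hker]
    exact subset_span (mem_image_of_mem y hi)
  have hnullity := LinearMap.finrank_range_add_finrank_ker Z.mulVecLin
  rw [hker, finrank_fintype_fun_eq_card] at hnullity
  have hZT := (hrank Z hZ).trans (rank_sum_vecMulVec_mul_mul_vecMulVec_le x y Z A hZy)
  rw [Matrix.rank] at hZT
  unfold Set.finrank at hZT ⊢
  omega

end PositiveMaps

theorem rank_nondecreasing_implies_matroid_intersection_full_rank_general {N K : ℕ}
    (x y : Fin K → Fin N → ℂ)
    (hrank : ∀ Z : Matrix (Fin N) (Fin N) ℂ, Z.PosSemidef →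
      Z.rank ≤ (∑ i : Fin K,
        vecMulVec (x i) (star (y i)) * Z * vecMulVec (y i) (star (x i))).rank) :
    ∃ f : Fin N → Fin K, StrictMono f ∧
      LinearIndependent ℂ (fun k => x (f k)) ∧ LinearIndependent ℂ (fun k => y (f k)) := by
  classical
  obtain ⟨S, -, hScard, hSx, hSy⟩ :=
    exists_finset_card_eq_linearIndepOn_of_le_finrank_add_finrank x y Finset.univ N fun A _ => by
      simpa [compl_eq_univ_sdiff] using
        le_finrank_image_add_finrank_image_compl_of_rank_le x y hrank A
  set f := S.orderEmbOfFin hScard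
  have hrange : range f = S := S.range_orderEmbOfFin hScard
  refine ⟨f, f.strictMono, ?_, ?_⟩
  · exact (linearIndepOn_range_iff f.injective x).mp (hrange ▸ hSx)
  · exact (linearIndepOn_range_iff f.injective y).mp (hrange ▸ hSy)

theorem rank_nondecreasing_implies_matroid_intersection_full_rank {N K : ℕ}
    (x y : Fin K → Fin N → ℂ) (hx : ∀ i, x i ≠ 0) (hy : ∀ i, y i ≠ 0)
    (hrank : ∀ Z : Matrix (Fin N) (Fin N) ℂ, Z.PosSemidef →
      Z.rank ≤ (∑ i : Fin K,
        vecMulVec (x i) (star (y i)) * Z * vecMulVec (y i) (star (x i))).rank) :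
    ∃ f : Fin N → Fin K, StrictMono f ∧
      LinearIndependent ℂ (fun k => x (f k)) ∧ LinearIndependent ℂ (fun k => y (f k)) :=
  rank_nondecreasing_implies_matroid_intersection_full_rank_general x y hrank
end

section
/- Let x_i, y_i ∈ ℂ^N (1 ≤ i ≤ K) be nonzero vectors such that for every subset A ⊆ {1,…,K}, dim span{x_i : i ∈ A} + dim span{y_j : j ∉ A} ≥ N (so the matroid intersection has rank N). Then the separable operator T(Z) = Σ_i x_i y_i† Z y_i x_i† is rank non-decreasing: rank(T(Z)) ≥ rank(Z) for all Z ⪰ 0. -/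
open Matrix
open scoped ComplexOrder

/-!
Write `c i = y i† Z y i`, which is `≥ 0`; then `T(Z) = ∑ i, c i • x i x i†`. For
`A = {i | c i ≠ 0}`, each `y j` with `j ∉ A` lies in `ker Z`, and each `v ∈ ker T(Z)` is
orthogonal to every `x i` with `i ∈ A`, since `v† T(Z) v = ∑ i, c i |x i† v|²`. Hence
`rank Z ≤ N - dim span y(Aᶜ) ≤ dim span x(A) ≤ rank T(Z)`, the middle step being the
Edmonds–Rado hypothesis at `A`.
-/

namespace Matrix

theorem vecMulVec_mul_mul_vecMulVec_s17 {α l m n o : Type*} [CommSemiring α] [Fintype m] [Fintype n]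
    (a : l → α) (b : m → α) (M : Matrix m n α) (c : n → α) (d : o → α) :
    vecMulVec a b * M * vecMulVec c d = (b ⬝ᵥ M *ᵥ c) • vecMulVec a d := by
  rw [vecMulVec_mul, vecMulVec_mul_vecMulVec, ← dotProduct_mulVec, vecMulVec_smul]

section Field

variable {K m n : Type*} [Field K] [Fintype n]

theorem rank_add_finrank_ker (A : Matrix m n K) :
    A.rank + Module.finrank K (LinearMap.ker A.mulVecLin) = Fintype.card n := by
  rw [rank, LinearMap.finrank_range_add_finrank_ker, Module.finrank_fintype_fun_eq_card]

theorem rank_le_rank_of_ker_le {m' : Type*} {A : Matrix m n K} {B : Matrix m' n K}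
    (h : LinearMap.ker A.mulVecLin ≤ LinearMap.ker B.mulVecLin) : B.rank ≤ A.rank := by
  have := Submodule.finrank_mono h
  have := A.rank_add_finrank_ker
  have := B.rank_add_finrank_ker
  omega

end Field

variable {𝕜 m n ι : Type*} [RCLike 𝕜] [Fintype n]

theorem finrank_span_image_le_rank (M : Matrix m n 𝕜) (x : ι → n → 𝕜) (s : Finset ι)
    (h : ∀ v, M *ᵥ v = 0 → ∀ i ∈ s, star (x i) ⬝ᵥ v = 0) :
    Module.finrank 𝕜 (Submodule.span 𝕜 (x '' s)) ≤ M.rank := by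
  let X : Matrix s n 𝕜 := .of fun i => star (x i)
  have hX : Module.finrank 𝕜 (Submodule.span 𝕜 (x '' s)) = X.rank := by
    have hcols : Xᴴ.col = fun i : s => x i := by
      ext i j
      simp [X]
    rw [← rank_conjTranspose, rank_eq_finrank_span_cols, hcols, Set.image_eq_range]
    rfl
  rw [hX]
  refine rank_le_rank_of_ker_le fun v hv => ?_
  ext i
  exact h v hv i i.2

theorem PosSemidef.finrank_span_add_rank_le {Z : Matrix n n 𝕜} (hZ : Z.PosSemidef)
    (y : ι → n → 𝕜) (s : Set ι) (h : ∀ j ∈ s, star (y j) ⬝ᵥ Z *ᵥ y j = 0) :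
    Module.finrank 𝕜 (Submodule.span 𝕜 (y '' s)) + Z.rank ≤ Fintype.card n := by
  have hker : Submodule.span 𝕜 (y '' s) ≤ LinearMap.ker Z.mulVecLin := by
    rw [Submodule.span_le]
    rintro _ ⟨j, hj, rfl⟩
    exact (hZ.dotProduct_mulVec_zero_iff (y j)).mp (h j hj)
  have := Submodule.finrank_mono hker
  have := Z.rank_add_finrank_ker
  omega

theorem star_dotProduct_smul_vecMulVec_mulVec (c : 𝕜) (a v : n → 𝕜) :
    star v ⬝ᵥ (c • vecMulVec a (star a)) *ᵥ v = c * (star (star a ⬝ᵥ v) * (star a ⬝ᵥ v)) := by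
  rw [smul_mulVec, vecMulVec_mulVec, dotProduct_smul, dotProduct_smul, star_dotProduct]
  simp

theorem dotProduct_eq_zero_of_sum_smul_vecMulVec_mulVec_eq_zero [Fintype ι] {c : ι → 𝕜}
    (hc : ∀ i, 0 ≤ c i) (x : ι → n → 𝕜) {v : n → 𝕜}
    (hv : (∑ i, c i • vecMulVec (x i) (star (x i))) *ᵥ v = 0) {i : ι} (hi : c i ≠ 0) :
    star (x i) ⬝ᵥ v = 0 := by
  have hsum : ∑ j, c j * (star (star (x j) ⬝ᵥ v) * (star (x j) ⬝ᵥ v)) = 0 := by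
    simp_rw [← star_dotProduct_smul_vecMulVec_mulVec, ← dotProduct_sum, ← sum_mulVec, hv,
      dotProduct_zero]
  have := (Finset.sum_eq_zero_iff_of_nonneg fun j _ =>
    mul_nonneg (hc j) (star_mul_self_nonneg _)).mp hsum i (Finset.mem_univ i)
  simpa [hi] using this

end Matrix

theorem edmonds_rado_implies_rank_nondecreasing_general {N K : ℕ}
    (x y : Fin K → Fin N → ℂ)
    (hER : ∀ A : Finset (Fin K),
      N ≤ Module.finrank ℂ (Submodule.span ℂ (x '' A)) +
            Module.finrank ℂ (Submodule.span ℂ (y '' (↑A)ᶜ)))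
    (Z : Matrix (Fin N) (Fin N) ℂ) (hZ : Z.PosSemidef) :
    Z.rank ≤ (∑ i : Fin K,
      vecMulVec (x i) (star (y i)) * Z * vecMulVec (y i) (star (x i))).rank := by
  classical
  set c : Fin K → ℂ := fun i => star (y i) ⬝ᵥ Z *ᵥ y i
  set A : Finset (Fin K) := {i | c i ≠ 0}
  have hT : ∑ i, vecMulVec (x i) (star (y i)) * Z * vecMulVec (y i) (star (x i)) =
      ∑ i, c i • vecMulVec (x i) (star (x i)) := by
    simp only [vecMulVec_mul_mul_vecMulVec_s17, c]
  have hspan_x := finrank_span_image_le_rank _ x A fun v hv i hi =>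
    dotProduct_eq_zero_of_sum_smul_vecMulVec_mulVec_eq_zero
      (fun i => hZ.dotProduct_mulVec_nonneg (y i)) x (hT ▸ hv) (by simpa [A] using hi)
  have hspan_y := hZ.finrank_span_add_rank_le y (↑A)ᶜ fun j hj => by simpa [A] using hj
  have hA := hER A
  rw [Fintype.card_fin] at hspan_y
  omega

theorem edmonds_rado_implies_rank_nondecreasing {N K : ℕ}
    (x y : Fin K → Fin N → ℂ) (hx : ∀ i, x i ≠ 0) (hy : ∀ i, y i ≠ 0)
    (hER : ∀ A : Finset (Fin K),
      N ≤ Module.finrank ℂ (Submodule.span ℂ (x '' A)) +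
            Module.finrank ℂ (Submodule.span ℂ (y '' (↑A)ᶜ)))
    (Z : Matrix (Fin N) (Fin N) ℂ) (hZ : Z.PosSemidef) :
    Z.rank ≤ (∑ i : Fin K,
      vecMulVec (x i) (star (y i)) * Z * vecMulVec (y i) (star (x i))).rank :=
  edmonds_rado_implies_rank_nondecreasing_general x y hER Z hZ
end

section
/- Let Sk₃ : M(3,ℂ) → M(3,ℂ) be defined by Sk₃(X) = (1/2)·Σ_{1≤i<j≤3} A_{(i,j)} X A_{(i,j)}†, where A_{(i,j)} = e_i e_j† − e_j e_i†. Then Sk₃ is doubly stochastic: Sk₃(I) = I and Sk₃*(I) = I; moreover for any unit vector x ∈ ℝ³, the image of Sk₃(xx†) is the orthogonal complement of x in ℝ³ (a 2-dimensional subspace), so in particular x ∉ Im Sk₃(xx†). -/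
open Matrix

/-- The skew-symmetric basis matrix `A_{(i,j)} = e_i e_j† − e_j e_i†`. -/
noncomputable def Askew (i j : Fin 3) : Matrix (Fin 3) (Fin 3) ℂ :=
  Matrix.single i j 1 - Matrix.single j i 1

/-- The completely positive operator
`Sk₃(X) = (1/2)·Σ_{1≤i<j≤3} A_{(i,j)} X A_{(i,j)}†`. -/
noncomputable def Sk3 (X : Matrix (Fin 3) (Fin 3) ℂ) : Matrix (Fin 3) (Fin 3) ℂ :=
  (2 : ℂ)⁻¹ • (Askew 0 1 * X * (Askew 0 1)ᴴ + Askew 0 2 * X * (Askew 0 2)ᴴ +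
    Askew 1 2 * X * (Askew 1 2)ᴴ)

/-! Summing the conjugations by the three skew-symmetric basis matrices gives the closed form
`Sk₃(X) = (tr X · I − Xᵀ) / 2`. Both stochasticity conditions are read off it, and for a real
unit vector `x` it gives `Sk₃(xxᵀ) = (I − xxᵀ) / 2`, half the projection onto `x^⊥`. -/

namespace Matrix

variable {n K : Type*} [Fintype n]

theorem range_mulVec_smul_of_ne_zero [Field K] {a : K} (ha : a ≠ 0) (M : Matrix n n K) :
    Set.range (a • M).mulVec = Set.range M.mulVec := by
  ext w
  constructor
  · rintro ⟨v, rfl⟩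
    exact ⟨a • v, by rw [smul_mulVec, mulVec_smul]⟩
  · rintro ⟨v, rfl⟩
    exact ⟨a⁻¹ • v, by rw [smul_mulVec, mulVec_smul, smul_smul, mul_inv_cancel₀ ha, one_smul]⟩

theorem one_sub_vecMulVec_mulVec [DecidableEq n] [CommRing K] (c v : n → K) :
    (1 - vecMulVec c c) *ᵥ v = v - (c ⬝ᵥ v) • c := by
  rw [sub_mulVec, one_mulVec, vecMulVec_mulVec, op_smul_eq_smul]

theorem range_mulVec_one_sub_vecMulVec [DecidableEq n] [CommRing K] {c : n → K}
    (hc : c ⬝ᵥ c = 1) : Set.range (1 - vecMulVec c c).mulVec = {v | c ⬝ᵥ v = 0} := by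
  ext w
  constructor
  · rintro ⟨v, rfl⟩
    simp only [Set.mem_ofPred_eq, one_sub_vecMulVec_mulVec, dotProduct_sub, dotProduct_smul, hc,
      smul_eq_mul, mul_one, sub_self]
  · intro (hw : c ⬝ᵥ w = 0)
    exact ⟨w, by rw [one_sub_vecMulVec_mulVec, hw, zero_smul, sub_zero]⟩

end Matrix

theorem Sk3_eq (X : Matrix (Fin 3) (Fin 3) ℂ) : Sk3 X = (2 : ℂ)⁻¹ • (X.trace • 1 - Xᵀ) := by
  ext i j
  fin_cases i <;> fin_cases j <;>
    simp [Sk3, Askew, mul_apply, Fin.sum_univ_three, single, trace] <;> ring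

theorem Sk3_vecMulVec_self (c : Fin 3 → ℂ) :
    Sk3 (vecMulVec c c) = (2 : ℂ)⁻¹ • ((c ⬝ᵥ c) • 1 - vecMulVec c c) := by
  rw [Sk3_eq, trace_vecMulVec, transpose_vecMulVec]

theorem Sk3_one : Sk3 1 = 1 := by
  rw [Sk3_eq, trace_one, transpose_one, Fintype.card_fin, Nat.cast_ofNat]
  module

theorem trace_Sk3 (X : Matrix (Fin 3) (Fin 3) ℂ) : (Sk3 X).trace = X.trace := by
  rw [Sk3_eq, trace_smul, trace_sub, trace_smul, trace_one, trace_transpose]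
  simp only [Fintype.card_fin, Nat.cast_ofNat, smul_eq_mul]
  ring

theorem range_Sk3_vecMulVec_self {c : Fin 3 → ℂ} (hc : c ⬝ᵥ c = 1) :
    Set.range (Sk3 (vecMulVec c c)).mulVec = {v | c ⬝ᵥ v = 0} := by
  rw [Sk3_vecMulVec_self, hc, one_smul, range_mulVec_smul_of_ne_zero (by norm_num),
    range_mulVec_one_sub_vecMulVec hc]

theorem Sk3_doublyStochastic_and_image :
    Sk3 1 = 1 ∧
    (∀ X : Matrix (Fin 3) (Fin 3) ℂ, Matrix.trace (Sk3 X) = Matrix.trace X) ∧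
    (∀ x : Fin 3 → ℝ, (∑ i, x i ^ 2) = 1 →
      (Set.range (Sk3 (vecMulVec (fun i => (x i : ℂ)) (fun i => (x i : ℂ)))).mulVec =
        {v : Fin 3 → ℂ | ∑ i, (x i : ℂ) * v i = 0}) ∧
      (fun i => (x i : ℂ)) ∉
        Set.range (Sk3 (vecMulVec (fun i => (x i : ℂ)) (fun i => (x i : ℂ)))).mulVec) := by
  refine ⟨Sk3_one, trace_Sk3, fun x hx => ?_⟩
  have hc : (fun i => (x i : ℂ)) ⬝ᵥ (fun i => (x i : ℂ)) = 1 := by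
    simp only [dotProduct, ← sq]
    exact_mod_cast hx
  refine ⟨range_Sk3_vecMulVec_self hc, fun hmem => ?_⟩
  rw [range_Sk3_vecMulVec_self hc] at hmem
  exact one_ne_zero (hc.symm.trans hmem)
end
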